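/- arXiv:2110.06686 — 4 statements merged into one kernel-verified Lean document; each statement's English description precedes it below -/
import Mathlib

section
/- Let X and Y be real-valued random variables on a probability space with cumulative distribution functions F_X and F_Y, and let g, h : ℝ → ℝ be strictly increasing functions. Then the cumulative distribution functions of g(X) and h(Y) satisfy F_{g(X)}(g(x)) = F_X(x) and F_{h(Y)}(h(y)) = F_Y(y) for all real x, y; consequently, for every u ∈ (0,1) with P(F_X(X) > u) > 0, E[F_{h(Y)}(h(Y)) | F_{g(X)}(g(X)) > u] = E[F_Y(Y) | F_X(X) > u], and the limit lim_{u→1⁻} E[F_{h(Y)}(h(Y)) | F_{g(X)}(g(X)) > u] exists if and only if lim_{u→1⁻} E[F_Y(Y) | F_X(X) > u] exists, in which case the two limits are equal. -/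
open MeasureTheory ProbabilityTheory Filter Set
open scoped ProbabilityTheory

theorem measure_setOf_comp_le_of_strictMono {Ω α β : Type*} [MeasurableSpace Ω]
    [LinearOrder α] [Preorder β] (μ : Measure Ω) {g : α → β} (hg : StrictMono g)
    (X : Ω → α) (x : α) :
    μ {ω | g (X ω) ≤ g x} = μ {ω | X ω ≤ x} := by
  simp only [hg.le_iff_le]

theorem causal_tail_coefficient_invariant_under_strictMono_general
    {Ω : Type*} [MeasurableSpace Ω] (μ : Measure Ω)
    (X Y : Ω → ℝ)
    (g h : ℝ → ℝ) (hg : StrictMono g) (hh : StrictMono h)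
    (FX FY FgX FhY : ℝ → ℝ)
    (hFX : ∀ t, FX t = (μ {ω | X ω ≤ t}).toReal)
    (hFY : ∀ t, FY t = (μ {ω | Y ω ≤ t}).toReal)
    (hFgX : ∀ t, FgX t = (μ {ω | g (X ω) ≤ t}).toReal)
    (hFhY : ∀ t, FhY t = (μ {ω | h (Y ω) ≤ t}).toReal) :
    (∀ x : ℝ, FgX (g x) = FX x) ∧
    (∀ y : ℝ, FhY (h y) = FY y) ∧
    (∀ u ∈ Set.Ioo (0 : ℝ) 1, 0 < μ {ω | u < FX (X ω)} →
      ∫ ω, FhY (h (Y ω)) ∂(μ[|{ω | u < FgX (g (X ω))}]) =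
        ∫ ω, FY (Y ω) ∂(μ[|{ω | u < FX (X ω)}])) ∧
    (∀ L : ℝ,
      Tendsto (fun u : ℝ => ∫ ω, FhY (h (Y ω)) ∂(μ[|{ω | u < FgX (g (X ω))}]))
          (nhdsWithin 1 (Set.Iio 1)) (nhds L) ↔
        Tendsto (fun u : ℝ => ∫ ω, FY (Y ω) ∂(μ[|{ω | u < FX (X ω)}]))
          (nhdsWithin 1 (Set.Iio 1)) (nhds L)) := by
  have hFgX_comp : ∀ x, FgX (g x) = FX x := fun x => by
    rw [hFgX, hFX, measure_setOf_comp_le_of_strictMono μ hg]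
  have hFhY_comp : ∀ y, FhY (h y) = FY y := fun y => by
    rw [hFhY, hFY, measure_setOf_comp_le_of_strictMono μ hh]
  simp [hFgX_comp, hFhY_comp]

/-- Invariance of the causal tail coefficient under strictly increasing
marginal transformations. -/
theorem causal_tail_coefficient_invariant_under_strictMono
    {Ω : Type*} [MeasurableSpace Ω] (μ : Measure Ω) [IsProbabilityMeasure μ]
    (X Y : Ω → ℝ) (hX : Measurable X) (hY : Measurable Y)
    (g h : ℝ → ℝ) (hg : StrictMono g) (hh : StrictMono h)
    (FX FY FgX FhY : ℝ → ℝ)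
    (hFX : ∀ t, FX t = (μ {ω | X ω ≤ t}).toReal)
    (hFY : ∀ t, FY t = (μ {ω | Y ω ≤ t}).toReal)
    (hFgX : ∀ t, FgX t = (μ {ω | g (X ω) ≤ t}).toReal)
    (hFhY : ∀ t, FhY t = (μ {ω | h (Y ω) ≤ t}).toReal) :
    (∀ x : ℝ, FgX (g x) = FX x) ∧
    (∀ y : ℝ, FhY (h y) = FY y) ∧
    (∀ u ∈ Set.Ioo (0 : ℝ) 1, 0 < μ {ω | u < FX (X ω)} →
      ∫ ω, FhY (h (Y ω)) ∂(μ[|{ω | u < FgX (g (X ω))}]) =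
        ∫ ω, FY (Y ω) ∂(μ[|{ω | u < FX (X ω)}])) ∧
    (∀ L : ℝ,
      Tendsto (fun u : ℝ => ∫ ω, FhY (h (Y ω)) ∂(μ[|{ω | u < FgX (g (X ω))}]))
          (nhdsWithin 1 (Set.Iio 1)) (nhds L) ↔
        Tendsto (fun u : ℝ => ∫ ω, FY (Y ω) ∂(μ[|{ω | u < FX (X ω)}]))
          (nhdsWithin 1 (Set.Iio 1)) (nhds L)) :=
  causal_tail_coefficient_invariant_under_strictMono_general μ X Y g h hg hh FX FY FgX FhY hFX hFY
    hFgX hFhY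
end

section
/- Let X and Y be independent real-valued random variables with cumulative distribution functions F_X and F_Y, suppose F_Y is continuous, and suppose P(F_X(X) > u) > 0 for every u ∈ (0,1). Then for every u ∈ (0,1), E[F_Y(Y) | F_X(X) > u] = 1/2, and hence the causal tail coefficient Γ(X,Y) = lim_{u→1⁻} E[F_Y(Y) | F_X(X) > u] exists and equals 1/2. -/
open MeasureTheory ProbabilityTheory Filter Set
open scoped ProbabilityTheory

-- auxiliary: expectation of CDF of an atomless prob measure is 1/2
lemma integral_cdf_eq_half (ν : Measure ℝ) [IsProbabilityMeasure ν]
    (hatom : ∀ t : ℝ, ν {t} = 0) :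
    ∫ t, (ν (Iic t)).toReal ∂ν = 1 / 2 := by
  have hmono : Monotone (fun t => ν (Iic t)) :=
    fun a b hab => measure_mono (Iic_subset_Iic.2 hab)
  have hmeas : Measurable (fun t => ν (Iic t)) := hmono.measurable
  have hdiag : (ν.prod ν) {p : ℝ × ℝ | p.1 = p.2} = 0 := by
    have hms : MeasurableSet {p : ℝ × ℝ | p.1 = p.2} :=
      measurableSet_eq_fun measurable_fst measurable_snd
    rw [Measure.prod_apply hms]
    have : ∀ x : ℝ, (Prod.mk x ⁻¹' {p : ℝ × ℝ | p.1 = p.2}) = {x} := by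
      intro x; ext y; simp [eq_comm]
    simp only [this]
    simp [hatom]
  have hs : MeasurableSet {p : ℝ × ℝ | p.2 ≤ p.1} :=
    measurableSet_le measurable_snd measurable_fst
  have ht : MeasurableSet {p : ℝ × ℝ | p.1 ≤ p.2} :=
    measurableSet_le measurable_fst measurable_snd
  have hsymm : (ν.prod ν) {p : ℝ × ℝ | p.1 ≤ p.2} = (ν.prod ν) {p : ℝ × ℝ | p.2 ≤ p.1} := by
    conv_lhs => rw [← Measure.prod_swap]
    rw [Measure.map_apply measurable_swap ht]
    congr 1
  have hunion : {p : ℝ × ℝ | p.2 ≤ p.1} ∪ {p : ℝ × ℝ | p.1 ≤ p.2} = univ := by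
    ext p; simp [le_total p.2 p.1]
  have hinter : {p : ℝ × ℝ | p.2 ≤ p.1} ∩ {p : ℝ × ℝ | p.1 ≤ p.2} ⊆ {p : ℝ × ℝ | p.1 = p.2} := by
    rintro p ⟨h1, h2⟩; exact le_antisymm h2 h1
  have hadd : (ν.prod ν) {p : ℝ × ℝ | p.2 ≤ p.1} + (ν.prod ν) {p : ℝ × ℝ | p.1 ≤ p.2} = 1 := by
    have := measure_union_add_inter (μ := ν.prod ν) {p : ℝ × ℝ | p.2 ≤ p.1} ht
    rw [hunion, measure_univ] at this
    have hz : (ν.prod ν) ({p : ℝ × ℝ | p.2 ≤ p.1} ∩ {p : ℝ × ℝ | p.1 ≤ p.2}) = 0 :=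
      measure_mono_null hinter hdiag
    rw [hz, add_zero] at this
    exact this.symm
  have hm : (ν.prod ν) {p : ℝ × ℝ | p.2 ≤ p.1} = 1 / 2 := by
    rw [hsymm] at hadd
    have h2 : 2 * (ν.prod ν) {p : ℝ × ℝ | p.2 ≤ p.1} = 1 := by
      rw [two_mul]; exact hadd
    rw [← h2, mul_comm, mul_div_assoc, ENNReal.div_self (by norm_num) (by norm_num), mul_one]
  have hlint : ∫⁻ t, ν (Iic t) ∂ν = (ν.prod ν) {p : ℝ × ℝ | p.2 ≤ p.1} := by
    rw [Measure.prod_apply hs]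
    exact lintegral_congr fun x => rfl
  rw [integral_toReal hmeas.aemeasurable
    (Filter.Eventually.of_forall fun t => lt_of_le_of_lt prob_le_one ENNReal.one_lt_top),
    hlint, hm]
  simp [ENNReal.toReal_div]

/-- For independent variables (no causal link), the causal tail
coefficient equals 1/2 exactly at every level `u`, hence in the limit. -/
theorem causal_tail_coefficient_of_indep
    {Ω : Type*} [MeasurableSpace Ω] (μ : Measure Ω) [IsProbabilityMeasure μ]
    (X Y : Ω → ℝ) (hX : Measurable X) (hY : Measurable Y)
    (hindep : ProbabilityTheory.IndepFun X Y μ)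
    (FX FY : ℝ → ℝ)
    (hFX : ∀ t, FX t = (μ {ω | X ω ≤ t}).toReal)
    (hFY : ∀ t, FY t = (μ {ω | Y ω ≤ t}).toReal)
    (hFYcont : Continuous FY)
    (hpos : ∀ u ∈ Set.Ioo (0 : ℝ) 1, 0 < μ {ω | u < FX (X ω)}) :
    (∀ u ∈ Set.Ioo (0 : ℝ) 1,
      ∫ ω, FY (Y ω) ∂(μ[|{ω | u < FX (X ω)}]) = 1 / 2) ∧
    Tendsto (fun u : ℝ => ∫ ω, FY (Y ω) ∂(μ[|{ω | u < FX (X ω)}]))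
      (nhdsWithin 1 (Set.Iio 1)) (nhds (1 / 2)) := by
  have hFXmono : Monotone FX := by
    intro a b hab
    rw [hFX a, hFX b]
    exact ENNReal.toReal_mono (measure_ne_top μ _)
      (measure_mono fun ω h => le_trans h hab)
  have hFXmeas : Measurable FX := hFXmono.measurable
  have hFYmeas : Measurable FY := hFYcont.measurable
  -- the law of Y
  set ν : Measure ℝ := μ.map Y with hν
  have hνprob : IsProbabilityMeasure ν := Measure.isProbabilityMeasure_map hY.aemeasurable
  have hFYν : ∀ t, FY t = (ν (Iic t)).toReal := by
    intro t
    rw [hFY t, hν, Measure.map_apply hY measurableSet_Iic]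
    rfl
  -- ν has no atoms since FY is continuous
  have hatom : ∀ t : ℝ, ν {t} = 0 := by
    intro t
    -- ν (Iio t) = ν (Iic t)
    have hseq : Tendsto (fun n : ℕ => t - (n + 1 : ℝ)⁻¹) atTop (nhds t) := by
      have : Tendsto (fun n : ℕ => ((n : ℝ) + 1)⁻¹) atTop (nhds 0) :=
        tendsto_one_div_add_atTop_nhds_zero_nat.congr (by intro n; simp [one_div])
      simpa using tendsto_const_nhds.sub this
    have h1 : Tendsto (fun n : ℕ => FY (t - ((n : ℝ) + 1)⁻¹)) atTop (nhds (FY t)) :=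
      (hFYcont.tendsto t).comp hseq
    have hmono2 : Monotone (fun n : ℕ => Iic (t - ((n : ℝ) + 1)⁻¹)) := by
      intro a b hab
      apply Iic_subset_Iic.2
      have : ((b : ℝ) + 1)⁻¹ ≤ ((a : ℝ) + 1)⁻¹ := by
        apply inv_anti₀ (by positivity)
        exact_mod_cast by omega
      linarith
    have hUn : (⋃ n : ℕ, Iic (t - ((n : ℝ) + 1)⁻¹)) = Iio t := by
      ext x
      simp only [mem_iUnion, mem_Iic, mem_Iio]
      constructor
      · rintro ⟨n, hn⟩
        have : (0 : ℝ) < ((n : ℝ) + 1)⁻¹ := by positivity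
        linarith
      · intro hx
        obtain ⟨n, hn⟩ := exists_nat_one_div_lt (show (0 : ℝ) < t - x by linarith)
        refine ⟨n, ?_⟩
        rw [one_div] at hn
        linarith
    have h2 : Tendsto (fun n : ℕ => ν (Iic (t - ((n : ℝ) + 1)⁻¹))) atTop (nhds (ν (Iio t))) := by
      rw [← hUn]
      exact tendsto_measure_iUnion_atTop hmono2
    have h2' : Tendsto (fun n : ℕ => FY (t - ((n : ℝ) + 1)⁻¹)) atTop
        (nhds ((ν (Iio t)).toReal)) := by
      have := (ENNReal.tendsto_toReal (measure_ne_top ν _)).comp h2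
      refine this.congr fun n => ?_
      simp only [Function.comp_apply, hFYν]
    have heq : (ν (Iio t)).toReal = FY t := tendsto_nhds_unique h2' h1
    have heq2 : ν (Iio t) = ν (Iic t) := by
      have := heq
      rw [hFYν t] at this
      exact (ENNReal.toReal_eq_toReal_iff' (measure_ne_top _ _) (measure_ne_top _ _)).1 this
    have hsplit : ν (Iic t) = ν (Iio t) + ν {t} := by
      rw [← Iio_union_right, measure_union (by simp) (measurableSet_singleton t)]
    rw [heq2] at hsplit
    exact ((ENNReal.add_right_inj (measure_ne_top ν (Iic t))).1
      (by rw [add_zero]; exact hsplit)).symm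
  -- expectation of FY ∘ Y
  have hI : ∫ ω, FY (Y ω) ∂μ = 1 / 2 := by
    rw [← integral_map hY.aemeasurable hFYmeas.aestronglyMeasurable]
    rw [show (fun t => FY t) = fun t => (ν (Iic t)).toReal from funext hFYν]
    exact integral_cdf_eq_half ν hatom
  have main : ∀ u ∈ Set.Ioo (0 : ℝ) 1,
      ∫ ω, FY (Y ω) ∂(μ[|{ω | u < FX (X ω)}]) = 1 / 2 := by
    intro u hu
    set A : Set Ω := {ω | u < FX (X ω)} with hA
    have hAeq : A = X ⁻¹' {t | u < FX t} := rfl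
    have hSmeas : MeasurableSet {t : ℝ | u < FX t} := measurableSet_lt measurable_const hFXmeas
    have hAmeas : MeasurableSet A := hX hSmeas
    have hA0 : μ A ≠ 0 := (hpos u hu).ne'
    have hAtop : μ A ≠ ⊤ := measure_ne_top μ A
    -- independence of the indicator and FY ∘ Y
    set g : ℝ → ℝ := ({t : ℝ | u < FX t}).indicator (fun _ => 1) with hg
    have hgmeas : Measurable g := measurable_const.indicator hSmeas
    have hind2 : IndepFun (g ∘ X) (FY ∘ Y) μ := hindep.comp hgmeas hFYmeas
    have hmul : ∫ ω, (g ∘ X) ω * (FY ∘ Y) ω ∂μ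
        = (∫ ω, (g ∘ X) ω ∂μ) * ∫ ω, (FY ∘ Y) ω ∂μ :=
      hind2.integral_fun_mul_eq_mul_integral ((hgmeas.comp hX).aestronglyMeasurable)
        ((hFYmeas.comp hY).aestronglyMeasurable)
    have hgX : ∫ ω, (g ∘ X) ω ∂μ = (μ A).toReal := by
      have : (g ∘ X) = A.indicator (fun _ => 1) := by
        ext ω
        simp only [Function.comp_apply, hg, hAeq]
        by_cases h : u < FX (X ω) <;> simp [indicator, h, Set.mem_setOf_eq]
      rw [this, integral_indicator_const _ hAmeas]
      simp [measureReal_def]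
    have hprod : ∫ ω in A, FY (Y ω) ∂μ = (μ A).toReal * (1 / 2) := by
      rw [← integral_indicator hAmeas]
      have : A.indicator (fun ω => FY (Y ω)) = fun ω => (g ∘ X) ω * (FY ∘ Y) ω := by
        ext ω
        simp only [Function.comp_apply, hg, hAeq]
        by_cases h : u < FX (X ω) <;> simp [indicator, h, Set.mem_setOf_eq]
      rw [this, hmul, hgX, show (∫ ω, (FY ∘ Y) ω ∂μ) = 1 / 2 from hI]
    have hAr : (μ A).toReal ≠ 0 := ENNReal.toReal_ne_zero.2 ⟨hA0, hAtop⟩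
    have hcond : μ[|A] = (μ A)⁻¹ • μ.restrict A := rfl
    rw [hcond, integral_smul_measure, hprod, smul_eq_mul, ENNReal.toReal_inv,
      ← mul_assoc, inv_mul_cancel₀ hAr, one_mul]
  refine ⟨main, ?_⟩
  have hev : (fun u : ℝ => ∫ ω, FY (Y ω) ∂(μ[|{ω | u < FX (X ω)}]))
      =ᶠ[nhdsWithin 1 (Set.Iio 1)] fun _ => 1 / 2 := by
    filter_upwards [Ioo_mem_nhdsLT_of_mem (show (1:ℝ) ∈ Ioc 0 1 by norm_num)] with u hu
    exact main u hu
  exact (tendsto_congr' hev).2 tendsto_const_nhds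
end

section
/- In an LSCM as defined, if X_i causes X_j (i.e., i ≠ j and i ∈ An(j)), then Γ_{ij} = 1 and Γ_{ji} ∈ (1/2, 1). -/
open MeasureTheory ProbabilityTheory Filter Set
open scoped ProbabilityTheory

set_option linter.unusedSectionVars false
namespace CTCaux

variable {Ω : Type*} [MeasurableSpace Ω] {μ : Measure Ω} [IsProbabilityMeasure μ]

lemma tail_meas {Z : Ω → ℝ} (hZ : Measurable Z) (t : ℝ) :
    MeasurableSet {ω | t < Z ω} := hZ measurableSet_Ioi

lemma cdf_meas {Z : Ω → ℝ} (hZ : Measurable Z) (t : ℝ) :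
    MeasurableSet {ω | Z ω ≤ t} := hZ measurableSet_Iic

lemma tendsto_tail_zero {Z : Ω → ℝ} (hZ : Measurable Z) :
    Tendsto (fun t => (μ {ω | t < Z ω}).toReal) atTop (nhds 0) := by
  have h1 : Tendsto (μ ∘ fun t : ℝ => {ω | t < Z ω}) atTop (nhds (μ (⋂ t : ℝ, {ω | t < Z ω}))) := by
    refine tendsto_measure_iInter_atTop (fun t => (tail_meas hZ t).nullMeasurableSet) ?_ ⟨0, measure_ne_top _ _⟩
    intro s t hst ω hω
    exact lt_of_le_of_lt hst hω
  have h2 : (⋂ t : ℝ, {ω | t < Z ω}) = ∅ := by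
    ext ω; simp only [mem_iInter, mem_setOf_eq, mem_empty_iff_false, iff_false, not_forall, not_lt]
    exact ⟨Z ω, le_refl _⟩
  rw [h2, measure_empty] at h1
  have := (ENNReal.tendsto_toReal (by simp)).comp h1
  exact this

lemma tendsto_cdf_atBot {Z : Ω → ℝ} (hZ : Measurable Z) :
    Tendsto (fun t => (μ {ω | Z ω ≤ t}).toReal) atBot (nhds 0) := by
  have h1 : Tendsto (μ ∘ fun t : ℝ => {ω | Z ω ≤ t}) atBot (nhds (μ (⋂ t : ℝ, {ω | Z ω ≤ t}))) := by
    refine tendsto_measure_iInter_atBot (fun t => (cdf_meas hZ t).nullMeasurableSet) ?_ ⟨0, measure_ne_top _ _⟩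
    intro s t hst ω hω
    exact le_trans hω hst
  have h2 : (⋂ t : ℝ, {ω | Z ω ≤ t}) = ∅ := by
    ext ω; simp only [mem_iInter, mem_setOf_eq, mem_empty_iff_false, iff_false, not_forall, not_le]
    exact ⟨Z ω - 1, by linarith⟩
  rw [h2, measure_empty] at h1
  have := (ENNReal.tendsto_toReal (by simp)).comp h1
  exact this

lemma cdf_eq_one_sub {Z : Ω → ℝ} (hZ : Measurable Z) (t : ℝ) :
    (μ {ω | Z ω ≤ t}).toReal = 1 - (μ {ω | t < Z ω}).toReal := by
  have hc : {ω | t < Z ω}ᶜ = {ω | Z ω ≤ t} := by ext ω; simp [not_lt]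
  have := measure_compl (μ := μ) (tail_meas hZ t) (measure_ne_top _ _)
  rw [hc] at this
  rw [this, measure_univ, ENNReal.toReal_sub_of_le prob_le_one ENNReal.one_ne_top]
  simp

lemma tendsto_cdf_atTop {Z : Ω → ℝ} (hZ : Measurable Z) :
    Tendsto (fun t => (μ {ω | Z ω ≤ t}).toReal) atTop (nhds 1) := by
  have : Tendsto (fun t => 1 - (μ {ω | t < Z ω}).toReal) atTop (nhds (1 - 0)) :=
    tendsto_const_nhds.sub (tendsto_tail_zero hZ)
  simpa [cdf_eq_one_sub hZ] using this

lemma cdf_mono {Z : Ω → ℝ} : Monotone (fun t => (μ {ω | Z ω ≤ t}).toReal) := by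
  intro s t hst
  exact ENNReal.toReal_mono (measure_ne_top _ _) (measure_mono (fun ω hω => le_trans hω hst))

lemma cdf_le_one {Z : Ω → ℝ} (t : ℝ) : (μ {ω | Z ω ≤ t}).toReal ≤ 1 := by
  have := measure_mono (μ := μ) (subset_univ {ω | Z ω ≤ t})
  rw [measure_univ] at this
  simpa using ENNReal.toReal_mono (by simp) this

/-- The PIT bound: `μ {F(Z) ≤ t} ≤ t` for `t ∈ (0,1)`, `F` the cdf of `Z`. -/
lemma pit {Z : Ω → ℝ} (hZ : Measurable Z) {F : ℝ → ℝ}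
    (hFdef : ∀ x, F x = (μ {ω | Z ω ≤ x}).toReal) {t : ℝ} (ht0 : 0 < t) (ht1 : t < 1) :
    μ {ω | F (Z ω) ≤ t} ≤ ENNReal.ofReal t := by
  set A : Set ℝ := {x | F x ≤ t} with hA
  have hFmono : Monotone F := fun x y hxy => by
    rw [hFdef x, hFdef y]
    exact ENNReal.toReal_mono (measure_ne_top _ _) (measure_mono fun ω hω => le_trans hω hxy)
  have hAne : A.Nonempty := by
    have := (tendsto_cdf_atBot (μ := μ) hZ).eventually_lt_const ht0
    rcases (this.exists) with ⟨x, hx⟩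
    refine ⟨x, ?_⟩
    show F x ≤ t
    rw [hFdef x]; linarith
  have hbdd : BddAbove A := by
    have := (tendsto_cdf_atTop (μ := μ) hZ).eventually_const_lt ht1
    rcases (eventually_atTop.1 this) with ⟨T, hT⟩
    refine ⟨T, fun x hx => ?_⟩
    by_contra hc
    push_neg at hc
    have := hT x (le_of_lt hc)
    rw [← hFdef x] at this
    exact absurd hx (by simp only [hA, mem_setOf_eq]; linarith)
  have hdc : ∀ x ∈ A, ∀ y, y ≤ x → y ∈ A := fun x hx y hyx => le_trans (hFmono hyx) hx
  set s := sSup A with hs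
  have hlt : ∀ x, x < s → x ∈ A := by
    intro x hx
    obtain ⟨a, ha, hxa⟩ := exists_lt_of_lt_csSup hAne hx
    exact hdc a ha x (le_of_lt hxa)
  have hset : {ω | F (Z ω) ≤ t} = Z ⁻¹' A := rfl
  have hcdfofReal : ∀ x : ℝ, μ {ω | Z ω ≤ x} = ENNReal.ofReal (F x) := by
    intro x; rw [hFdef x, ENNReal.ofReal_toReal (measure_ne_top _ _)]
  by_cases hFs : F s ≤ t
  · have hsub : Z ⁻¹' A ⊆ {ω | Z ω ≤ s} := fun ω hω => le_csSup hbdd hω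
    calc μ {ω | F (Z ω) ≤ t} ≤ μ {ω | Z ω ≤ s} := by rw [hset]; exact measure_mono hsub
    _ = ENNReal.ofReal (F s) := hcdfofReal s
    _ ≤ ENNReal.ofReal t := ENNReal.ofReal_le_ofReal hFs
  · push_neg at hFs
    have hsub : Z ⁻¹' A ⊆ {ω | Z ω < s} := by
      intro ω hω
      have h1 : Z ω ≤ s := le_csSup hbdd hω
      rcases lt_or_eq_of_le h1 with h | h
      · exact h
      · exfalso
        have hsA : s ∈ A := by rw [← h]; exact hω
        simp only [hA, mem_setOf_eq] at hsA
        linarith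
    have hunion : {ω | Z ω < s} = ⋃ n : ℕ, {ω | Z ω ≤ s - 1 / (n + 1)} := by
      ext ω
      simp only [mem_setOf_eq, mem_iUnion]
      constructor
      · intro h
        obtain ⟨n, hn⟩ := exists_nat_one_div_lt (by linarith : (0:ℝ) < s - Z ω)
        exact ⟨n, by push_cast at hn ⊢; linarith⟩
      · rintro ⟨n, hn⟩
        have : (0:ℝ) < 1 / (n + 1) := by positivity
        linarith
    have hdir : Directed (· ⊆ ·) (fun n : ℕ => {ω | Z ω ≤ s - 1 / (n + 1)}) := by
      refine Monotone.directed_le ?_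
      intro a b hab ω hω
      have hle : (1:ℝ) / (b + 1) ≤ 1 / (a + 1) := by
        apply one_div_le_one_div_of_le (by positivity)
        have hab' : (a:ℝ) ≤ b := Nat.cast_le.mpr hab
        push_cast; linarith
      simp only [mem_setOf_eq] at hω ⊢
      linarith
    calc μ {ω | F (Z ω) ≤ t} ≤ μ {ω | Z ω < s} := by rw [hset]; exact measure_mono hsub
    _ = ⨆ n : ℕ, μ {ω | Z ω ≤ s - 1 / (n + 1)} := by rw [hunion]; exact hdir.measure_iUnion
    _ ≤ ENNReal.ofReal t := by
        refine iSup_le fun n => ?_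
        rw [hcdfofReal]
        refine ENNReal.ofReal_le_ofReal ?_
        have h01 : (0:ℝ) < 1 / (n + 1) := by positivity
        exact hlt _ (by linarith)

/-- bounded measurable functions are integrable (prob measure). -/
lemma integrable_of_bounded {W : Ω → ℝ} (hW : Measurable W) (C : ℝ) (hC : ∀ ω, |W ω| ≤ C) :
    Integrable W μ := by
  refine (integrable_const C).mono' hW.aestronglyMeasurable (ae_of_all _ fun ω => ?_)
  simpa using hC ω

/-- E[F(Z)] ≥ 1/2 where F is the cdf of Z. -/
lemma mean_cdf_ge_half {Z : Ω → ℝ} (hZ : Measurable Z) {F : ℝ → ℝ}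
    (hFdef : ∀ x, F x = (μ {ω | Z ω ≤ x}).toReal) :
    1 / 2 ≤ ∫ ω, F (Z ω) ∂μ := by
  have hFmono : Monotone F := fun x y hxy => by
    rw [hFdef x, hFdef y]
    exact ENNReal.toReal_mono (measure_ne_top _ _) (measure_mono fun ω hω => le_trans hω hxy)
  set W : Ω → ℝ := fun ω => F (Z ω) with hWdef
  have hWmeas : Measurable W := (hFmono.measurable).comp hZ
  have hW0 : ∀ ω, 0 ≤ W ω := fun ω => by rw [hWdef]; simp only; rw [hFdef]; exact ENNReal.toReal_nonneg
  have hW1 : ∀ ω, W ω ≤ 1 := fun ω => by rw [hWdef]; simp only; rw [hFdef]; exact cdf_le_one _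
  have hWint : Integrable W μ := integrable_of_bounded hWmeas 1 (fun ω => abs_le.2 ⟨by linarith [hW0 ω], hW1 ω⟩)
  rw [hWint.integral_eq_integral_meas_lt (ae_of_all _ hW0)]
  -- the layer-cake integrand
  set g : ℝ → ℝ := fun u => (μ {a | u < W a}).toReal with hg
  have hgmeas : Measurable g := by
    refine Measurable.ennreal_toReal (Antitone.measurable ?_)
    intro u v huv
    exact measure_mono (fun a ha => lt_of_le_of_lt huv ha)
  have hgnonneg : ∀ u, 0 ≤ g u := fun u => ENNReal.toReal_nonneg
  have hgint : IntegrableOn g (Ioi 0) volume := by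
    constructor
    · exact hgmeas.aestronglyMeasurable
    · rw [hasFiniteIntegral_iff_ofReal (ae_of_all _ hgnonneg)]
      have heq : ∀ᵐ u ∂(volume.restrict (Ioi (0:ℝ))), ENNReal.ofReal (g u) = μ {a | u < W a} :=
        ae_of_all _ (fun u => ENNReal.ofReal_toReal (measure_ne_top _ _))
      rw [lintegral_congr_ae heq, ← lintegral_eq_lintegral_meas_lt μ (ae_of_all _ hW0) hWmeas.aemeasurable]
      calc ∫⁻ ω, ENNReal.ofReal (W ω) ∂μ ≤ ∫⁻ _, 1 ∂μ := by
            refine lintegral_mono fun ω => ?_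
            simpa using ENNReal.ofReal_le_ofReal (hW1 ω)
      _ = 1 := by simp
      _ < ⊤ := by simp
  have step1 : ∫ u in Ioo (0:ℝ) 1, g u ≤ ∫ u in Ioi (0:ℝ), g u := by
    refine setIntegral_mono_set hgint (ae_of_all _ hgnonneg) (HasSubset.Subset.eventuallyLE ?_)
    intro u hu; exact hu.1
  have step2 : ∫ u in Ioo (0:ℝ) 1, (1 - u) ≤ ∫ u in Ioo (0:ℝ) 1, g u := by
    refine setIntegral_mono_on ((continuous_const.sub continuous_id).integrableOn_Icc.mono_set Ioo_subset_Icc_self) (hgint.mono_set (fun u hu => hu.1)) measurableSet_Ioo ?_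
    intro u hu
    have hpit := pit hZ hFdef hu.1 hu.2
    have h2 : (μ {ω | W ω ≤ u}).toReal ≤ u := by
      calc (μ {ω | W ω ≤ u}).toReal ≤ (ENNReal.ofReal u).toReal := ENNReal.toReal_mono (by simp) hpit
      _ = u := ENNReal.toReal_ofReal (le_of_lt hu.1)
    have h1s := cdf_eq_one_sub (μ := μ) hWmeas u
    show 1 - u ≤ (μ {a | u < W a}).toReal
    linarith
  have step3 : (1:ℝ)/2 = ∫ u in Ioo (0:ℝ) 1, (1 - u) := by
    rw [← integral_Ioc_eq_integral_Ioo, ← intervalIntegral.integral_of_le (zero_le_one)]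
    have hsub := intervalIntegral.integral_sub (f := fun _ : ℝ => (1:ℝ)) (g := fun u : ℝ => u)
      (μ := volume) (a := 0) (b := 1)
      (continuous_const.intervalIntegrable _ _) (continuous_id.intervalIntegrable _ _)
    rw [hsub]
    simp [integral_id]
    norm_num
  have : ∫ (t : ℝ) in Ioi 0, μ.real {a | t < W a} = ∫ u in Ioi (0:ℝ), g u := rfl
  linarith

/-- E[F(Z)] < 1 when the cdf F of Z is everywhere < 1. -/
lemma mean_cdf_lt_one {Z : Ω → ℝ} (hZ : Measurable Z) {F : ℝ → ℝ}
    (hFdef : ∀ x, F x = (μ {ω | Z ω ≤ x}).toReal)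
    (hlt : ∀ x, (μ {ω | Z ω ≤ x}).toReal < 1) :
    ∫ ω, F (Z ω) ∂μ < 1 := by
  have hFmono : Monotone F := fun x y hxy => by
    rw [hFdef x, hFdef y]
    exact ENNReal.toReal_mono (measure_ne_top _ _) (measure_mono fun ω hω => le_trans hω hxy)
  set W : Ω → ℝ := fun ω => F (Z ω) with hWdef
  have hWmeas : Measurable W := (hFmono.measurable).comp hZ
  have hW0 : ∀ ω, 0 ≤ W ω := fun ω => by rw [hWdef]; simp only; rw [hFdef]; exact ENNReal.toReal_nonneg
  have hW1 : ∀ ω, W ω < 1 := fun ω => by rw [hWdef]; simp only; rw [hFdef]; exact hlt _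
  have hWint : Integrable W μ := integrable_of_bounded hWmeas 1 (fun ω => abs_le.2 ⟨by linarith [hW0 ω], le_of_lt (hW1 ω)⟩)
  rcases lt_or_ge (∫ ω, W ω ∂μ) 1 with h | h
  · exact h
  exfalso
  have hle : ∫ ω, W ω ∂μ ≤ 1 := by
    calc ∫ ω, W ω ∂μ ≤ ∫ _, (1:ℝ) ∂μ := integral_mono hWint (integrable_const 1) (fun ω => le_of_lt (hW1 ω))
    _ = 1 := by simp
  have heq : ∫ ω, W ω ∂μ = 1 := le_antisymm hle h
  have hsubint : Integrable (fun ω => 1 - W ω) μ := (integrable_const 1).sub hWint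
  have hzero : ∫ ω, (1 - W ω) ∂μ = 0 := by
    rw [integral_sub (integrable_const 1) hWint, heq]; simp
  have hae : (fun ω => 1 - W ω) =ᵐ[μ] 0 :=
    (integral_eq_zero_iff_of_nonneg (fun ω => by simp only [Pi.zero_apply]; linarith [hW1 ω]) hsubint).1 hzero
  have : μ {ω | ¬ ((fun ω => 1 - W ω) ω = (0 : Ω → ℝ) ω)} = 0 := hae
  have huniv : {ω | ¬ ((fun ω => 1 - W ω) ω = (0 : Ω → ℝ) ω)} = univ := by
    ext ω; simp only [Pi.zero_apply, mem_setOf_eq, mem_univ, iff_true]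
    intro hc; have := hW1 ω; linarith [hc]
  rw [huniv] at this
  simp [measure_univ] at this

end CTCaux

open Finset

namespace CTCmat

variable {p : ℕ} {B : Matrix (Fin p) (Fin p) ℝ}

/-- entries of powers of a nonneg matrix are nonneg -/
lemma pow_entry_nonneg (hBnn : ∀ j k, 0 ≤ B j k) :
    ∀ m (k h : Fin p), 0 ≤ (B ^ m) k h := by
  intro m
  induction m with
  | zero => intro k h; simp [Matrix.one_apply]; split <;> norm_num
  | succ m ih =>
    intro k h
    rw [pow_succ, Matrix.mul_apply]
    exact Finset.sum_nonneg fun g _ => mul_nonneg (ih k g) (hBnn g h)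

lemma exists_pos_of_sum_pos {ι : Type*} {s : Finset ι} {f : ι → ℝ}
    (h : 0 < ∑ g ∈ s, f g) (hnn : ∀ g ∈ s, 0 ≤ f g) : ∃ g ∈ s, 0 < f g := by
  by_contra hc
  push_neg at hc
  have : ∑ g ∈ s, f g ≤ 0 := Finset.sum_nonpos fun g hg => hc g hg
  linarith

lemma pow_pos_rtg (hBnn : ∀ j k, 0 ≤ B j k) :
    ∀ m (k h : Fin p), 0 < (B ^ m) k h →
      Relation.ReflTransGen (fun a b : Fin p => 0 < B b a) h k := by
  intro m
  induction m with
  | zero =>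
    intro k h hpos
    rw [pow_zero, Matrix.one_apply] at hpos
    split at hpos
    · subst ‹k = h›; exact Relation.ReflTransGen.refl
    · norm_num at hpos
  | succ m ih =>
    intro k h hpos
    rw [pow_succ', Matrix.mul_apply] at hpos
    obtain ⟨g, _, hg⟩ := exists_pos_of_sum_pos hpos
      (fun g _ => mul_nonneg (hBnn k g) (pow_entry_nonneg hBnn m g h))
    have h1 : 0 < B k g := by
      rcases lt_or_ge 0 (B k g) with h' | h'
      · exact h'
      · nlinarith [pow_entry_nonneg hBnn m g h]
    have h2 : 0 < (B ^ m) g h := by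
      rcases lt_or_ge 0 ((B ^ m) g h) with h' | h'
      · exact h'
      · nlinarith [hBnn k g]
    exact (ih g h h2).tail h1

lemma rtg_pow (hBnn : ∀ j k, 0 ≤ B j k) {h k : Fin p}
    (hr : Relation.ReflTransGen (fun a b : Fin p => 0 < B b a) h k) :
    ∃ m, 0 < (B ^ m) k h := by
  induction hr with
  | refl => exact ⟨0, by simp [Matrix.one_apply]⟩
  | @tail b c _ hbc ih =>
    obtain ⟨m, hm⟩ := ih
    refine ⟨m + 1, ?_⟩
    rw [pow_succ', Matrix.mul_apply]
    have hterm : 0 < B c b * (B ^ m) b h := mul_pos hbc hm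
    have hle : B c b * (B ^ m) b h ≤ ∑ g, B c g * (B ^ m) g h :=
      Finset.single_le_sum (f := fun g => B c g * (B ^ m) g h)
        (fun g _ => mul_nonneg (hBnn c g) (pow_entry_nonneg hBnn m g h)) (Finset.mem_univ b)
    linarith

/-- a positive entry of B^m yields a chain of length m -/
lemma pow_pos_chain (hBnn : ∀ j k, 0 ≤ B j k) :
    ∀ m (k h : Fin p), 0 < (B ^ m) k h →
      ∃ v : ℕ → Fin p, v 0 = h ∧ v m = k ∧ ∀ l, l < m → 0 < B (v (l + 1)) (v l) := by
  intro m
  induction m with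
  | zero =>
    intro k h hpos
    rw [pow_zero, Matrix.one_apply] at hpos
    by_cases hkh : k = h
    · subst hkh; exact ⟨fun _ => k, rfl, rfl, fun l hl => absurd hl (Nat.not_lt_zero l)⟩
    · simp [hkh] at hpos
  | succ m ih =>
    intro k h hpos
    rw [pow_succ', Matrix.mul_apply] at hpos
    obtain ⟨g, _, hg⟩ := exists_pos_of_sum_pos hpos
      (fun g _ => mul_nonneg (hBnn k g) (pow_entry_nonneg hBnn m g h))
    have h1 : 0 < B k g := by
      rcases lt_or_ge 0 (B k g) with h' | h'
      · exact h'
      · nlinarith [pow_entry_nonneg hBnn m g h]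
    have h2 : 0 < (B ^ m) g h := by
      rcases lt_or_ge 0 ((B ^ m) g h) with h' | h'
      · exact h'
      · nlinarith [hBnn k g]
    obtain ⟨v, hv0, hvm, hvchain⟩ := ih g h h2
    refine ⟨fun l => if l = m + 1 then k else v l, by simp [hv0], by simp, ?_⟩
    intro l hl
    rcases Nat.lt_succ_iff_lt_or_eq.1 hl with hlm | hlm
    · have hne1 : l + 1 ≠ m + 1 := by omega
      have hne2 : l ≠ m + 1 := by omega
      have hne3 : l ≠ m := by omega
      simpa [hne1, hne2, hne3] using hvchain l hlm
    · subst hlm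
      have hne2 : l ≠ l + 1 := by omega
      simpa [hne2, hvm] using h1

lemma chain_transgen {v : ℕ → Fin p} {m : ℕ}
    (hchain : ∀ l, l < m → 0 < B (v (l + 1)) (v l)) :
    ∀ l l', l < l' → l' ≤ m → Relation.TransGen (fun a b : Fin p => 0 < B b a) (v l) (v l') := by
  intro l l' hll' hl'm
  obtain ⟨d, rfl⟩ : ∃ d, l' = l + d + 1 := ⟨l' - l - 1, by omega⟩
  clear hll'
  induction d with
  | zero => exact Relation.TransGen.single (hchain l (by omega))
  | succ d ihd =>
    have : l + (d + 1) + 1 = (l + d + 1) + 1 := by omega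
    rw [this] at hl'm ⊢
    exact (ihd (by omega)).tail (hchain (l + d + 1) (by omega))

/-- positive entries of B^m force m < p (acyclicity pigeonhole) -/
lemma pow_pos_lt (hBnn : ∀ j k, 0 ≤ B j k)
    (hacyc : ∀ k : Fin p, ¬ Relation.TransGen (fun a b : Fin p => 0 < B b a) k k)
    {m : ℕ} {k h : Fin p} (hpos : 0 < (B ^ m) k h) : m < p := by
  obtain ⟨v, hv0, hvm, hchain⟩ := pow_pos_chain hBnn m k h hpos
  have hinj : Function.Injective (fun l : Fin (m + 1) => v l) := by
    intro a b hab
    by_contra hne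
    have hne' : (a : ℕ) ≠ (b : ℕ) := fun hc => hne (Fin.ext hc)
    have hab' : v a = v b := hab
    rcases Nat.lt_or_ge (a : ℕ) (b : ℕ) with hlt | hge
    · have := chain_transgen hchain a b hlt (Nat.lt_succ_iff.1 b.isLt)
      rw [hab'] at this
      exact hacyc _ this
    · have hlt : (b : ℕ) < (a : ℕ) := by omega
      have := chain_transgen hchain b a hlt (Nat.lt_succ_iff.1 a.isLt)
      rw [hab'] at this
      exact hacyc _ this
  have := Fintype.card_le_of_injective _ hinj
  simpa using this

lemma pow_p_eq_zero (hBnn : ∀ j k, 0 ≤ B j k)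
    (hacyc : ∀ k : Fin p, ¬ Relation.TransGen (fun a b : Fin p => 0 < B b a) k k) :
    B ^ p = 0 := by
  ext k h
  have hnn := pow_entry_nonneg hBnn p k h
  rcases lt_or_eq_of_le hnn with hpos | heq
  · exact absurd (pow_pos_lt hBnn hacyc hpos) (lt_irrefl p)
  · simpa using heq.symm

/-- the fundamental matrix -/
noncomputable def Nmat (B : Matrix (Fin p) (Fin p) ℝ) (p' : ℕ) : Matrix (Fin p) (Fin p) ℝ :=
  ∑ m ∈ Finset.range p', B ^ m

lemma Nmat_mul (hBnn : ∀ j k, 0 ≤ B j k)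
    (hacyc : ∀ k : Fin p, ¬ Relation.TransGen (fun a b : Fin p => 0 < B b a) k k) :
    Nmat B p * (1 - B) = 1 := by
  have h1 : Nmat B p * (1 - B) = ∑ m ∈ Finset.range p, (B ^ m - B ^ (m + 1)) := by
    rw [Nmat, Finset.sum_mul]
    congr 1
    funext m
    rw [mul_sub, mul_one, ← pow_succ]
  rw [h1, Finset.sum_range_sub' (fun m => B ^ m)]
  rw [pow_p_eq_zero hBnn hacyc]
  simp

/-- solving the linear system -/
lemma solve {x e : Fin p → ℝ}
    (hBnn : ∀ j k, 0 ≤ B j k)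
    (hacyc : ∀ k : Fin p, ¬ Relation.TransGen (fun a b : Fin p => 0 < B b a) k k)
    (hx : ∀ j, x j = (∑ k, B j k * x k) + e j) :
    ∀ k, x k = ∑ h, (Nmat B p) k h * e h := by
  have he : e = (1 - B).mulVec x := by
    funext j
    rw [Matrix.sub_mulVec, Matrix.one_mulVec]
    have : B.mulVec x j = ∑ k, B j k * x k := by
      rw [Matrix.mulVec, dotProduct]
    rw [Pi.sub_apply, this]
    have := hx j
    linarith
  have hxe : (Nmat B p).mulVec e = x := by
    rw [he, Matrix.mulVec_mulVec, Nmat_mul hBnn hacyc, Matrix.one_mulVec]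
  intro k
  conv_lhs => rw [← hxe]
  rw [Matrix.mulVec, dotProduct]

lemma Nmat_nonneg (hBnn : ∀ j k, 0 ≤ B j k) (k h : Fin p) : 0 ≤ (Nmat B p) k h := by
  rw [Nmat, Matrix.sum_apply]
  exact Finset.sum_nonneg fun m _ => pow_entry_nonneg hBnn m k h

lemma Nmat_pos_iff (hBnn : ∀ j k, 0 ≤ B j k)
    (hacyc : ∀ k : Fin p, ¬ Relation.TransGen (fun a b : Fin p => 0 < B b a) k k)
    (k h : Fin p) :
    0 < (Nmat B p) k h ↔ Relation.ReflTransGen (fun a b : Fin p => 0 < B b a) h k := by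
  constructor
  · intro hpos
    rw [Nmat, Matrix.sum_apply] at hpos
    obtain ⟨m, _, hm⟩ := exists_pos_of_sum_pos hpos (fun m _ => pow_entry_nonneg hBnn m k h)
    exact pow_pos_rtg hBnn m k h hm
  · intro hr
    obtain ⟨m, hm⟩ := rtg_pow hBnn hr
    have hmp : m < p := pow_pos_lt hBnn hacyc hm
    have hle : (B ^ m) k h ≤ (Nmat B p) k h := by
      rw [Nmat, Matrix.sum_apply]
      exact Finset.single_le_sum (f := fun m' => (B ^ m') k h)
        (fun m' _ => pow_entry_nonneg hBnn m' k h) (Finset.mem_range.2 hmp)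
    linarith

end CTCmat

namespace CTChelp

open MeasureTheory ProbabilityTheory Filter Set

variable {Ω : Type*} [MeasurableSpace Ω] {μ : Measure Ω} [IsProbabilityMeasure μ]

/-- transfer of limits through ratios -/
lemma ratio_transfer {f g h : ℝ → ℝ} {A B : ℝ}
    (hfg : Tendsto (fun t => f t / g t) atTop (nhds A))
    (hgh : Tendsto (fun t => g t / h t) atTop (nhds B))
    (hg : ∀ᶠ t in atTop, g t ≠ 0) :
    Tendsto (fun t => f t / h t) atTop (nhds (A * B)) := by
  refine (hfg.mul hgh).congr' ?_
  filter_upwards [hg] with t hgt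
  rcases eq_or_ne (h t) 0 with h0 | h0
  · simp [h0]
  · field_simp

lemma setIntegral_le_measure {G : Ω → ℝ} (hGint : Integrable G μ)
    (hG1 : ∀ ω, G ω ≤ 1) {A : Set Ω} (hA : MeasurableSet A) :
    ∫ ω in A, G ω ∂μ ≤ (μ A).toReal := by
  calc ∫ ω in A, G ω ∂μ ≤ ∫ _ in A, (1:ℝ) ∂μ :=
        setIntegral_mono_on hGint.integrableOn (integrable_const 1).integrableOn hA
          (fun ω _ => hG1 ω)
  _ = (μ A).toReal := by simp [setIntegral_const, measureReal_def]

lemma setIntegral_union_le {G : Ω → ℝ} (hGint : Integrable G μ) (hG0 : ∀ ω, 0 ≤ G ω)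
    {A B : Set Ω} (hA : MeasurableSet A) (hB : MeasurableSet B) :
    ∫ ω in A ∪ B, G ω ∂μ ≤ ∫ ω in A, G ω ∂μ + ∫ ω in B, G ω ∂μ := by
  rw [← integral_indicator (hA.union hB), ← integral_indicator hA, ← integral_indicator hB,
    ← integral_add (hGint.indicator hA) (hGint.indicator hB)]
  refine integral_mono ((hGint.indicator (hA.union hB))) ((hGint.indicator hA).add (hGint.indicator hB)) ?_
  intro ω
  by_cases hωA : ω ∈ A <;> by_cases hωB : ω ∈ B <;>
    simp [Set.indicator_of_mem, Set.indicator_of_notMem, hωA, hωB, Set.mem_union, hG0 ω]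

lemma setIntegral_diff_ge {G : Ω → ℝ} (hGint : Integrable G μ) (hG0 : ∀ ω, 0 ≤ G ω)
    (hG1 : ∀ ω, G ω ≤ 1) {A B : Set Ω} (hA : MeasurableSet A) (hB : MeasurableSet B) :
    ∫ ω in A, G ω ∂μ - (μ (A ∩ B)).toReal ≤ ∫ ω in A \ B, G ω ∂μ := by
  have hsplit : ∫ ω in A, G ω ∂μ = ∫ ω in A ∩ B, G ω ∂μ + ∫ ω in A \ B, G ω ∂μ := by
    rw [← setIntegral_union disjoint_sdiff_inter.symm ?_ hGint.integrableOn hGint.integrableOn]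
    · congr 1
      rw [Set.inter_union_diff]
    · exact hA.diff hB
  have h1 : ∫ ω in A ∩ B, G ω ∂μ ≤ (μ (A ∩ B)).toReal :=
    setIntegral_le_measure hGint hG1 (hA.inter hB)
  linarith

end CTChelp

namespace CTCrv

open MeasureTheory ProbabilityTheory Filter Set CTCaux CTChelp

variable {Ω : Type*} [MeasurableSpace Ω] {μ : Measure Ω} [IsProbabilityMeasure μ]
variable {p : ℕ} {ε : Fin p → Ω → ℝ} {α : ℝ} {c : Fin p → ℝ} {ℓ : ℝ → ℝ}

/-- φ is eventually positive -/
lemma phi_pos (hℓpos : ∀ x : ℝ, 0 < x → 0 < ℓ x) {x : ℝ} (hx : 0 < x) :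
    0 < ℓ x * x ^ (-α) := mul_pos (hℓpos x hx) (Real.rpow_pos_of_pos hx _)

/-- ratio of φ at scaled arguments -/
lemma phi_ratio (hℓpos : ∀ x : ℝ, 0 < x → 0 < ℓ x)
    (hslow : ∀ d : ℝ, 0 < d → Tendsto (fun x : ℝ => ℓ (d * x) / ℓ x) atTop (nhds 1))
    {ρ : ℝ} (hρ : 0 < ρ) :
    Tendsto (fun t : ℝ => (ℓ (ρ * t) * (ρ * t) ^ (-α)) / (ℓ t * t ^ (-α))) atTop
      (nhds (ρ ^ (-α))) := by
  have h1 : Tendsto (fun t : ℝ => (ℓ (ρ * t) / ℓ t) * ρ ^ (-α)) atTop (nhds (1 * ρ ^ (-α))) :=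
    (hslow ρ hρ).mul_const _
  rw [one_mul] at h1
  refine h1.congr' ?_
  filter_upwards [eventually_gt_atTop 0] with t ht
  have hrt : (ρ * t) ^ (-α) = ρ ^ (-α) * t ^ (-α) := Real.mul_rpow (le_of_lt hρ) (le_of_lt ht)
  have hℓt := hℓpos t ht
  have htα : (0:ℝ) < t ^ (-α) := Real.rpow_pos_of_pos ht _
  field_simp [hrt]
  rw [hrt]; ring

/-- tail of ε_h at scaled argument, relative to φ -/
lemma tail_ratio (hℓpos : ∀ x : ℝ, 0 < x → 0 < ℓ x)
    (hslow : ∀ d : ℝ, 0 < d → Tendsto (fun x : ℝ => ℓ (d * x) / ℓ x) atTop (nhds 1))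
    (htail : ∀ j, Tendsto (fun x : ℝ => (μ {ω | x < ε j ω}).toReal / (ℓ x * x ^ (-α)))
      atTop (nhds (c j)))
    (h : Fin p) {ρ : ℝ} (hρ : 0 < ρ) :
    Tendsto (fun t : ℝ => (μ {ω | ρ * t < ε h ω}).toReal / (ℓ t * t ^ (-α))) atTop
      (nhds (c h * ρ ^ (-α))) := by
  have hcomp : Tendsto (fun t : ℝ => ρ * t) atTop atTop :=
    (tendsto_const_mul_atTop_of_pos hρ).2 tendsto_id
  refine ratio_transfer (g := fun t => ℓ (ρ * t) * (ρ * t) ^ (-α)) ?_ ?_ ?_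
  · exact (htail h).comp hcomp
  · exact phi_ratio hℓpos hslow hρ
  · filter_upwards [hcomp.eventually (eventually_gt_atTop 0)] with t ht
    exact ne_of_gt (phi_pos hℓpos ht)

/-- the tail of ε_h is eventually positive -/
lemma eventually_tail_pos (hℓpos : ∀ x : ℝ, 0 < x → 0 < ℓ x)
    (hc : ∀ j, 0 < c j)
    (htail : ∀ j, Tendsto (fun x : ℝ => (μ {ω | x < ε j ω}).toReal / (ℓ x * x ^ (-α)))
      atTop (nhds (c j)))
    (h : Fin p) :
    ∀ᶠ x in atTop, 0 < (μ {ω | x < ε h ω}).toReal := by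
  filter_upwards [(htail h).eventually_const_lt (half_lt_self (hc h)), eventually_gt_atTop 0]
    with x hx hx0
  have hφ := phi_pos (α := α) hℓpos hx0
  have hr : 0 < (μ {ω | x < ε h ω}).toReal / (ℓ x * x ^ (-α)) :=
    lt_trans (half_pos (hc h)) hx
  have hmul := mul_pos hr hφ
  rwa [div_mul_cancel₀ _ (ne_of_gt hφ)] at hmul

section Master

variable {Ω : Type*} [MeasurableSpace Ω] {μ : Measure Ω} [IsProbabilityMeasure μ]
variable {p : ℕ} {ε : Fin p → Ω → ℝ} {α : ℝ} {c : Fin p → ℝ} {ℓ : ℝ → ℝ}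

/-- independence of one noise from the tuple of others -/
lemma indep_tuple (hεmeas : ∀ j, Measurable (ε j))
    (hεindep : iIndepFun ε μ) {h : Fin p} {T : Finset (Fin p)}
    (hhT : h ∉ T) :
    IndepFun (ε h) (fun ω (g : T) => ε g ω) μ := by
  have hd : Disjoint ({h} : Finset (Fin p)) T := by
    simp [Finset.disjoint_left, hhT]
  have H := hεindep.indepFun_finset {h} T hd hεmeas
  exact H.comp (measurable_pi_apply (⟨h, Finset.mem_singleton_self h⟩ : ({h} : Finset (Fin p))))
    measurable_id

/-- THE MASTER LEMMA: tail asymptotics of ∫_{Y>t} G for Y a positive linear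
combination of the independent regularly-varying noises. -/
lemma masterM
    (hεmeas : ∀ j, Measurable (ε j))
    (hεindep : iIndepFun ε μ)
    (hc : ∀ j, 0 < c j)
    (hℓpos : ∀ x : ℝ, 0 < x → 0 < ℓ x)
    (hslow : ∀ d : ℝ, 0 < d → Tendsto (fun x : ℝ => ℓ (d * x) / ℓ x) atTop (nhds 1))
    (htail : ∀ j, Tendsto (fun x : ℝ => (μ {ω | x < ε j ω}).toReal / (ℓ x * x ^ (-α)))
      atTop (nhds (c j)))
    (S : Finset (Fin p)) (hS : S.Nonempty) (a : Fin p → ℝ) (ha : ∀ h ∈ S, 0 < a h)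
    (G : Ω → ℝ) (hGm : Measurable G) (hG0 : ∀ ω, 0 ≤ G ω) (hG1 : ∀ ω, G ω ≤ 1)
    (L : Fin p → ℝ)
    (hL : ∀ h ∈ S, Tendsto
      (fun x => (∫ ω in {ω | x < ε h ω}, G ω ∂μ) / (μ {ω | x < ε h ω}).toReal)
      atTop (nhds (L h))) :
    Tendsto (fun t => (∫ ω in {ω | t < ∑ h ∈ S, a h * ε h ω}, G ω ∂μ) / (ℓ t * t ^ (-α)))
      atTop (nhds (∑ h ∈ S, L h * (c h * a h ^ α))) := by
  classical
  set Y : Ω → ℝ := fun ω => ∑ h ∈ S, a h * ε h ω with hYdef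
  have hYmeas : Measurable Y :=
    Finset.measurable_sum S (fun h _ => (hεmeas h).const_mul (a h))
  set σS : ℝ := ∑ h ∈ S, a h with hσdef
  have hσ : 0 < σS := Finset.sum_pos ha hS
  set δ : ℝ := (2 * σS)⁻¹ with hδdef
  have hδ : 0 < δ := by rw [hδdef]; positivity
  have hGint : Integrable G μ := CTCaux.integrable_of_bounded hGm 1
    (fun ω => abs_le.2 ⟨by linarith [hG0 ω], hG1 ω⟩)
  set R : Fin p → Ω → ℝ := fun h ω => ∑ g ∈ S.erase h, a g * ε g ω with hRdef
  have hRmeas : ∀ h, Measurable (R h) :=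
    fun h => Finset.measurable_sum _ (fun g _ => (hεmeas g).const_mul (a g))
  have hYsplit : ∀ h ∈ S, ∀ ω, Y ω = a h * ε h ω + R h ω := by
    intro h hh ω
    rw [hYdef, hRdef]
    exact (Finset.add_sum_erase S (fun g => a g * ε g ω) hh).symm
  have haσ : ∀ h ∈ S, a h ≤ σS := by
    intro h hh
    rw [hσdef]
    exact Finset.single_le_sum (fun g hg => le_of_lt (ha g hg)) hh
  set piece : Fin p → ℝ → Set Ω := fun h t =>
    {ω | t < Y ω} ∩ {ω | δ * t < ε h ω} ∩ {ω | ∀ g ∈ S, g < h → ε g ω ≤ δ * t} with hpiecedef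
  have hpiece_meas : ∀ h t, MeasurableSet (piece h t) := by
    intro h t
    refine (((CTCaux.tail_meas hYmeas t).inter (CTCaux.tail_meas (hεmeas h) (δ * t)))).inter ?_
    have heq : {ω | ∀ g ∈ S, g < h → ε g ω ≤ δ * t}
        = ⋂ g ∈ (↑(S.filter fun g => g < h) : Set (Fin p)), {ω | ε g ω ≤ δ * t} := by
      ext ω
      simp only [mem_setOf_eq, mem_iInter, Finset.coe_filter, Finset.mem_filter]
      constructor
      · rintro H g ⟨hg, hgh⟩; exact H g hg hgh
      · intro H g hg hgh; exact H g ⟨hg, hgh⟩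
    rw [heq]
    exact MeasurableSet.biInter (Finset.countable_toSet _)
      (fun g _ => CTCaux.cdf_meas (hεmeas g) (δ * t))
  -- the cover
  have hcover : ∀ t : ℝ, 0 < t → {ω | t < Y ω} = ⋃ h ∈ S, piece h t := by
    intro t ht
    apply Set.Subset.antisymm
    · intro ω hω
      have hY : t < Y ω := hω
      set s' := S.filter (fun h => δ * t < ε h ω) with hs'def
      have hs'ne : s'.Nonempty := by
        by_contra hempty
        rw [Finset.not_nonempty_iff_eq_empty] at hempty
        have hall : ∀ h ∈ S, ε h ω ≤ δ * t := by
          intro h hh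
          by_contra hcon
          push_neg at hcon
          have : h ∈ s' := Finset.mem_filter.2 ⟨hh, hcon⟩
          rw [hempty] at this
          exact absurd this (Finset.notMem_empty h)
        have hle : Y ω ≤ σS * (δ * t) := by
          rw [hYdef, hσdef]
          simp only
          rw [Finset.sum_mul]
          refine Finset.sum_le_sum (fun h hh => ?_)
          exact mul_le_mul_of_nonneg_left (hall h hh) (le_of_lt (ha h hh))
        have : σS * (δ * t) = t / 2 := by
          rw [hδdef]; field_simp
        rw [this] at hle
        linarith
      set hstar := s'.min' hs'ne with hstardef
      have hstarS : hstar ∈ S := (Finset.mem_filter.1 (s'.min'_mem hs'ne)).1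
      have hstarε : δ * t < ε hstar ω := (Finset.mem_filter.1 (s'.min'_mem hs'ne)).2
      refine Set.mem_biUnion hstarS ?_
      refine ⟨⟨hY, hstarε⟩, ?_⟩
      intro g hg hglt
      by_contra hcon
      push_neg at hcon
      have : g ∈ s' := Finset.mem_filter.2 ⟨hg, hcon⟩
      have := Finset.min'_le s' g this
      rw [← hstardef] at this
      exact absurd hglt (not_lt.2 this)
    · refine Set.iUnion₂_subset (fun h hh => ?_)
      intro ω hω
      exact hω.1.1
  -- disjointness of pieces
  have hdisj : ∀ t : ℝ, (↑S : Set (Fin p)).Pairwise (Function.onFun Disjoint fun h => piece h t) := by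
    intro t h1 hh1 h2 hh2 hne
    have key : ∀ {u v : Fin p}, u ∈ S → u < v → Disjoint (piece u t) (piece v t) := by
      intro u v hu huv
      rw [Set.disjoint_left]
      rintro ω ⟨⟨_, h2ω⟩, _⟩ hω'
      exact absurd (hω'.2 u hu huv) (not_le.2 h2ω)
    rcases lt_or_gt_of_ne hne with hlt | hgt
    · exact key (Finset.mem_coe.1 hh1) hlt
    · exact (key (Finset.mem_coe.1 hh2) hgt).symm
  -- decomposition of the integral
  have hdecomp : ∀ t : ℝ, 0 < t →
      (∫ ω in {ω | t < Y ω}, G ω ∂μ) = ∑ h ∈ S, ∫ ω in piece h t, G ω ∂μ := by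
    intro t ht
    rw [hcover t ht]
    exact integral_biUnion_finset S (fun h _ => hpiece_meas h t) (hdisj t)
      (fun h _ => hGint.integrableOn)
  -- PER-PIECE UPPER BOUND
  have hupper : ∀ h ∈ S, ∀ η : ℝ, 0 < η → η < 1 → ∀ t : ℝ, 0 < t →
      ∫ ω in piece h t, G ω ∂μ ≤
        (∫ ω in {ω | ((1 - η) / a h) * t < ε h ω}, G ω ∂μ)
        + (μ {ω | δ * t < ε h ω}).toReal * (μ {ω | η * t < R h ω}).toReal := by
    intro h hh η hη hη1 t ht
    have hah := ha h hh
    set E1 : Set Ω := {ω | ((1 - η) / a h) * t < ε h ω} with hE1def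
    set E2 : Set Ω := {ω | δ * t < ε h ω} ∩ {ω | η * t < R h ω} with hE2def
    have hsub : piece h t ⊆ E1 ∪ E2 := by
      rintro ω ⟨⟨htY, hδε⟩, -⟩
      by_cases hc1 : ((1 - η) / a h) * t < ε h ω
      · exact Or.inl hc1
      · push_neg at hc1
        right
        refine ⟨hδε, ?_⟩
        have hsplit := hYsplit h hh ω
        have hbd : a h * ε h ω ≤ (1 - η) * t := by
          have h2 := mul_le_mul_of_nonneg_left hc1 (le_of_lt hah)
          calc a h * ε h ω ≤ a h * (((1 - η) / a h) * t) := h2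
          _ = (1 - η) * t := by field_simp
        simp only [Set.mem_setOf_eq] at htY ⊢
        nlinarith
    have hE1m : MeasurableSet E1 := CTCaux.tail_meas (hεmeas h) _
    have hE2m : MeasurableSet E2 :=
      (CTCaux.tail_meas (hεmeas h) _).inter (CTCaux.tail_meas (hRmeas h) _)
    have hstep : ∫ ω in piece h t, G ω ∂μ ≤ (∫ ω in E1, G ω ∂μ) + (μ E2).toReal := by
      calc ∫ ω in piece h t, G ω ∂μ ≤ ∫ ω in E1 ∪ E2, G ω ∂μ :=
            setIntegral_mono_set hGint.integrableOn (ae_of_all _ (fun ω => hG0 ω))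
              (HasSubset.Subset.eventuallyLE hsub)
      _ ≤ (∫ ω in E1, G ω ∂μ) + ∫ ω in E2, G ω ∂μ :=
            CTChelp.setIntegral_union_le hGint hG0 hE1m hE2m
      _ ≤ (∫ ω in E1, G ω ∂μ) + (μ E2).toReal := by
            have := CTChelp.setIntegral_le_measure hGint hG1 hE2m; linarith
    refine le_trans hstep ?_
    have hμE2 : (μ E2).toReal
        = (μ {ω | δ * t < ε h ω}).toReal * (μ {ω | η * t < R h ω}).toReal := by
      have hhT : h ∉ S.erase h := Finset.notMem_erase h S
      have hτ := indep_tuple hεmeas hεindep hhT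
      set fR : (↥(S.erase h) → ℝ) → ℝ :=
        fun v => ∑ g ∈ (S.erase h).attach, a g * v g with hfRdef
      have hfRmeas : Measurable fR :=
        Finset.measurable_sum _ (fun g _ => (measurable_pi_apply g).const_mul _)
      have hRpre : {ω | η * t < R h ω}
          = (fun ω (g : ↥(S.erase h)) => ε g ω) ⁻¹' {v | η * t < fR v} := by
        ext ω
        simp only [Set.mem_setOf_eq, Set.mem_preimage, hfRdef, hRdef]
        rw [Finset.sum_attach (S.erase h) (fun g => a g * ε g ω)]
      have hBvm : MeasurableSet {v : (↥(S.erase h) → ℝ) | η * t < fR v} :=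
        hfRmeas measurableSet_Ioi
      have hprod := hτ.measure_inter_preimage_eq_mul
        (Set.Ioi (δ * t)) {v | η * t < fR v} measurableSet_Ioi hBvm
      have hE2eq : E2 = (ε h) ⁻¹' (Set.Ioi (δ * t))
          ∩ ((fun ω (g : ↥(S.erase h)) => ε g ω) ⁻¹' {v | η * t < fR v}) := by
        rw [hE2def, hRpre]; rfl
      rw [hE2eq, hprod, ENNReal.toReal_mul, ← hRpre]
      rfl
    rw [hμE2]
  -- PER-PIECE LOWER BOUND
  have hlower : ∀ h ∈ S, ∀ η : ℝ, 0 < η → ∀ t : ℝ, 0 < t →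
      (∫ ω in {ω | ((1 + η) / a h) * t < ε h ω}, G ω ∂μ)
        - (μ {ω | ((1 + η) / a h) * t < ε h ω}).toReal *
          (μ ((⋃ g ∈ S.erase h, {ω | δ * t < ε g ω}) ∪ {ω | R h ω ≤ -(η * t)})).toReal
      ≤ ∫ ω in piece h t, G ω ∂μ := by
    intro h hh η hη t ht
    have hah := ha h hh
    set s' : ℝ := ((1 + η) / a h) * t with hs'def
    set A : Set Ω := {ω | s' < ε h ω} with hAdef
    set Bbad : Set Ω := (⋃ g ∈ S.erase h, {ω | δ * t < ε g ω}) ∪ {ω | R h ω ≤ -(η * t)}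
      with hBdef
    have hAm : MeasurableSet A := CTCaux.tail_meas (hεmeas h) _
    have hBm : MeasurableSet Bbad := by
      refine MeasurableSet.union ?_ (CTCaux.cdf_meas (hRmeas h) _)
      exact MeasurableSet.biUnion (Finset.countable_toSet _)
        (fun g _ => CTCaux.tail_meas (hεmeas g) _)
    have hδs' : δ * t < s' := by
      have key : δ < (1 + η) / a h := by
        rw [hδdef, ← one_div, div_lt_div_iff₀ (by positivity) hah]
        nlinarith [haσ h hh]
      exact mul_lt_mul_of_pos_right key ht
    have hsub : A \ Bbad ⊆ piece h t := by
      rintro ω ⟨hA', hnB⟩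
      rw [hBdef] at hnB
      have hgood : ∀ g ∈ S.erase h, ε g ω ≤ δ * t := by
        intro g hg
        by_contra hcon
        push_neg at hcon
        exact hnB (Or.inl (Set.mem_biUnion hg hcon))
      have hR : -(η * t) < R h ω := by
        by_contra hcon
        push_neg at hcon
        exact hnB (Or.inr hcon)
      have hA'' : s' < ε h ω := hA'
      refine ⟨⟨?_, lt_trans hδs' hA''⟩, ?_⟩
      · have hsplit := hYsplit h hh ω
        have h1 : (1 + η) * t < a h * ε h ω := by
          have h2 := mul_lt_mul_of_pos_left hA'' hah
          calc (1 + η) * t = a h * s' := by rw [hs'def]; field_simp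
          _ < a h * ε h ω := h2
        simp only [Set.mem_setOf_eq]
        nlinarith
      · intro g hg hglt
        exact hgood g (Finset.mem_erase.2 ⟨ne_of_lt hglt, hg⟩)
    have hprodB : μ (A ∩ Bbad) = μ A * μ Bbad := by
      have hhT : h ∉ S.erase h := Finset.notMem_erase h S
      have hτ := indep_tuple hεmeas hεindep hhT
      set fR : (↥(S.erase h) → ℝ) → ℝ :=
        fun v => ∑ g ∈ (S.erase h).attach, a g * v g with hfRdef
      have hfRmeas : Measurable fR :=
        Finset.measurable_sum _ (fun g _ => (measurable_pi_apply g).const_mul _)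
      set Bv : Set (↥(S.erase h) → ℝ) :=
        (⋃ g : ↥(S.erase h), {v | δ * t < v g}) ∪ {v | fR v ≤ -(η * t)}
        with hBvdef
      have hBvm : MeasurableSet Bv := by
        refine MeasurableSet.union ?_ (hfRmeas measurableSet_Iic)
        exact MeasurableSet.iUnion (fun g => (measurable_pi_apply g) measurableSet_Ioi)
      have hBpre : Bbad = (fun ω (g : ↥(S.erase h)) => ε g ω) ⁻¹' Bv := by
        rw [hBdef, hBvdef]
        ext ω
        simp only [Set.mem_union, Set.mem_iUnion, Set.mem_setOf_eq, Set.mem_preimage,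
          exists_prop, hfRdef]
        rw [Finset.sum_attach (S.erase h) (fun g => a g * ε g ω)]
        constructor
        · rintro (⟨g, hg, hgt⟩ | hr)
          · exact Or.inl ⟨⟨g, hg⟩, hgt⟩
          · exact Or.inr hr
        · rintro (⟨⟨g, hg⟩, hgt⟩ | hr)
          · exact Or.inl ⟨g, hg, hgt⟩
          · exact Or.inr hr
      have hApre : A = (ε h) ⁻¹' (Set.Ioi s') := rfl
      rw [hApre, hBpre]
      exact hτ.measure_inter_preimage_eq_mul (Set.Ioi s') Bv measurableSet_Ioi hBvm
    have hdg := CTChelp.setIntegral_diff_ge hGint hG0 hG1 hAm hBm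
    have hmono : ∫ ω in A \ Bbad, G ω ∂μ ≤ ∫ ω in piece h t, G ω ∂μ :=
      setIntegral_mono_set hGint.integrableOn (ae_of_all _ (fun ω => hG0 ω))
        (HasSubset.Subset.eventuallyLE hsub)
    rw [hprodB, ENNReal.toReal_mul] at hdg
    linarith
  -- MAIN TERM LIMITS
  have hmain : ∀ h ∈ S, ∀ ρ : ℝ, 0 < ρ →
      Tendsto (fun t => (∫ ω in {ω | ρ * t < ε h ω}, G ω ∂μ) / (ℓ t * t ^ (-α))) atTop
        (nhds (L h * (c h * ρ ^ (-α)))) := by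
    intro h hh ρ hρ
    have hcomp : Tendsto (fun t : ℝ => ρ * t) atTop atTop :=
      (tendsto_const_mul_atTop_of_pos hρ).2 tendsto_id
    refine CTChelp.ratio_transfer (g := fun t => (μ {ω | ρ * t < ε h ω}).toReal) ?_ ?_ ?_
    · exact (hL h hh).comp hcomp
    · exact tail_ratio hℓpos hslow htail h hρ
    · filter_upwards [hcomp.eventually (eventually_tail_pos hℓpos hc htail h)] with t htp
      exact ne_of_gt htp
  -- ERROR TERM LIMITS (upper)
  have herr1 : ∀ h : Fin p, ∀ η : ℝ, 0 < η → Tendsto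
      (fun t => ((μ {ω | δ * t < ε h ω}).toReal * (μ {ω | η * t < R h ω}).toReal)
        / (ℓ t * t ^ (-α))) atTop (nhds 0) := by
    intro h η hη
    have h1 := tail_ratio (μ := μ) (ε := ε) hℓpos hslow htail h hδ
    have h2 : Tendsto (fun t => (μ {ω | η * t < R h ω}).toReal) atTop (nhds 0) :=
      (CTCaux.tendsto_tail_zero (hRmeas h)).comp ((tendsto_const_mul_atTop_of_pos hη).2 tendsto_id)
    have h3 := h1.mul h2
    rw [mul_zero] at h3
    refine h3.congr (fun t => ?_)
    ring
  -- ERROR TERM LIMITS (lower)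
  have hPbad : ∀ h ∈ S, ∀ η : ℝ, 0 < η → Tendsto
      (fun t => (μ ((⋃ g ∈ S.erase h, {ω | δ * t < ε g ω}) ∪ {ω | R h ω ≤ -(η * t)})).toReal)
      atTop (nhds 0) := by
    intro h _ η hη
    have hbound : ∀ t : ℝ,
        (μ ((⋃ g ∈ S.erase h, {ω | δ * t < ε g ω}) ∪ {ω | R h ω ≤ -(η * t)})).toReal
        ≤ (∑ g ∈ S.erase h, (μ {ω | δ * t < ε g ω}).toReal)
          + (μ {ω | R h ω ≤ -(η * t)}).toReal := by
      intro t
      have hne : ∀ s : Set Ω, μ s ≠ ⊤ := fun s => measure_ne_top μ s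
      have h1 : μ ((⋃ g ∈ S.erase h, {ω | δ * t < ε g ω}) ∪ {ω | R h ω ≤ -(η * t)})
          ≤ μ (⋃ g ∈ S.erase h, {ω | δ * t < ε g ω}) + μ {ω | R h ω ≤ -(η * t)} :=
        measure_union_le _ _
      have h2 : μ (⋃ g ∈ S.erase h, {ω | δ * t < ε g ω})
          ≤ ∑ g ∈ S.erase h, μ {ω | δ * t < ε g ω} := measure_biUnion_finset_le _ _
      calc (μ ((⋃ g ∈ S.erase h, {ω | δ * t < ε g ω}) ∪ {ω | R h ω ≤ -(η * t)})).toReal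
          ≤ ((μ (⋃ g ∈ S.erase h, {ω | δ * t < ε g ω})) + μ {ω | R h ω ≤ -(η * t)}).toReal :=
            ENNReal.toReal_mono (ENNReal.add_ne_top.2 ⟨hne _, hne _⟩) h1
      _ = (μ (⋃ g ∈ S.erase h, {ω | δ * t < ε g ω})).toReal
            + (μ {ω | R h ω ≤ -(η * t)}).toReal := ENNReal.toReal_add (hne _) (hne _)
      _ ≤ (∑ g ∈ S.erase h, μ {ω | δ * t < ε g ω}).toReal
            + (μ {ω | R h ω ≤ -(η * t)}).toReal := by
            have := ENNReal.toReal_mono (a := μ (⋃ g ∈ S.erase h, {ω | δ * t < ε g ω}))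
              (b := ∑ g ∈ S.erase h, μ {ω | δ * t < ε g ω})
              (ENNReal.sum_ne_top.2 (fun g _ => hne _)) h2
            linarith
      _ = _ := by
            rw [ENNReal.toReal_sum (fun g _ => hne _)]
    have hlim : Tendsto (fun t => (∑ g ∈ S.erase h, (μ {ω | δ * t < ε g ω}).toReal)
        + (μ {ω | R h ω ≤ -(η * t)}).toReal) atTop (nhds 0) := by
      have hsum : Tendsto (fun t => ∑ g ∈ S.erase h, (μ {ω | δ * t < ε g ω}).toReal)
          atTop (nhds 0) := by
        have := tendsto_finset_sum (S.erase h) (fun g _ =>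
          (CTCaux.tendsto_tail_zero (μ := μ) (hεmeas g)).comp
            ((tendsto_const_mul_atTop_of_pos hδ).2 tendsto_id))
        simpa using this
      have hleft : Tendsto (fun t => (μ {ω | R h ω ≤ -(η * t)}).toReal) atTop (nhds 0) := by
        have hneg : Tendsto (fun t : ℝ => -(η * t)) atTop atBot :=
          tendsto_neg_atTop_atBot.comp ((tendsto_const_mul_atTop_of_pos hη).2 tendsto_id)
        exact (CTCaux.tendsto_cdf_atBot (hRmeas h)).comp hneg
      simpa using hsum.add hleft
    exact squeeze_zero (fun t => ENNReal.toReal_nonneg) hbound hlim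
  have herr2 : ∀ h ∈ S, ∀ η : ℝ, 0 < η → Tendsto
      (fun t => ((μ {ω | ((1 + η) / a h) * t < ε h ω}).toReal *
        (μ ((⋃ g ∈ S.erase h, {ω | δ * t < ε g ω}) ∪ {ω | R h ω ≤ -(η * t)})).toReal)
        / (ℓ t * t ^ (-α))) atTop (nhds 0) := by
    intro h hh η hη
    have hρ' : 0 < (1 + η) / a h := div_pos (by linarith) (ha h hh)
    have h1 := tail_ratio (μ := μ) (ε := ε) hℓpos hslow htail h hρ'
    have h3 := h1.mul (hPbad h hh η hη)
    rw [mul_zero] at h3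
    refine h3.congr (fun t => ?_)
    ring
  -- FINAL ASSEMBLY
  show Tendsto (fun t => (∫ ω in {ω | t < Y ω}, G ω ∂μ) / (ℓ t * t ^ (-α))) atTop
    (nhds (∑ h ∈ S, L h * (c h * a h ^ α)))
  have hconst : ∀ h ∈ S, ∀ sgn : ℝ, Tendsto
      (fun η : ℝ => L h * (c h * ((1 + sgn * η) / a h) ^ (-α))) (nhds 0)
      (nhds (L h * (c h * a h ^ α))) := by
    intro h hh sgn
    have hah := ha h hh
    have hbase : Tendsto (fun η : ℝ => (1 + sgn * η) / a h) (nhds 0) (nhds ((a h)⁻¹)) := by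
      have hcont : Continuous fun η : ℝ => (1 + sgn * η) / a h :=
        (continuous_const.add (continuous_const.mul continuous_id)).div_const _
      have := hcont.tendsto 0
      simpa using this
    have hrpow : ContinuousAt (fun x : ℝ => x ^ (-α)) ((a h)⁻¹) :=
      Real.continuousAt_rpow_const _ _ (Or.inl (ne_of_gt (inv_pos.2 hah)))
    have hcomp := (hrpow.tendsto).comp hbase
    have hval : ((a h)⁻¹ : ℝ) ^ (-α) = a h ^ α := by
      rw [Real.inv_rpow (le_of_lt hah), Real.rpow_neg (le_of_lt hah), inv_inv]
    rw [hval] at hcomp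
    exact (hcomp.const_mul (c h)).const_mul (L h)
  refine tendsto_order.2 ⟨?_, ?_⟩
  -- LOWER
  · intro K' hK'
    have hcont : Tendsto (fun η : ℝ => ∑ h ∈ S, L h * (c h * ((1 + 1 * η) / a h) ^ (-α)))
        (nhds 0) (nhds (∑ h ∈ S, L h * (c h * a h ^ α))) :=
      tendsto_finset_sum _ (fun h hh => hconst h hh 1)
    have h1 : ∀ᶠ η in nhdsWithin (0:ℝ) (Set.Ioi 0),
        K' < ∑ h ∈ S, L h * (c h * ((1 + 1 * η) / a h) ^ (-α)) :=
      (hcont.mono_left nhdsWithin_le_nhds).eventually_const_lt hK'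
    have h2 : ∀ᶠ η in nhdsWithin (0:ℝ) (Set.Ioi 0), 0 < η := eventually_mem_nhdsWithin
    obtain ⟨η, hηK, hη0⟩ := (h1.and h2).exists
    have hAll : Tendsto (fun t => ∑ h ∈ S,
        ((∫ ω in {ω | ((1 + η) / a h) * t < ε h ω}, G ω ∂μ) / (ℓ t * t ^ (-α))
          - ((μ {ω | ((1 + η) / a h) * t < ε h ω}).toReal *
            (μ ((⋃ g ∈ S.erase h, {ω | δ * t < ε g ω}) ∪ {ω | R h ω ≤ -(η * t)})).toReal)
            / (ℓ t * t ^ (-α)))) atTop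
        (nhds (∑ h ∈ S, L h * (c h * ((1 + 1 * η) / a h) ^ (-α)))) := by
      refine tendsto_finset_sum _ (fun h hh => ?_)
      have := (hmain h hh ((1 + η) / a h) (div_pos (by linarith) (ha h hh))).sub
        (herr2 h hh η hη0)
      simpa using this
    filter_upwards [hAll.eventually_const_lt hηK, eventually_gt_atTop 0] with t hlt ht
    refine lt_of_lt_of_le hlt ?_
    rw [hdecomp t ht, Finset.sum_div]
    refine Finset.sum_le_sum (fun h hh => ?_)
    have hφt : 0 < ℓ t * t ^ (-α) := phi_pos hℓpos ht
    rw [← sub_div]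
    exact (div_le_div_iff_of_pos_right hφt).mpr (hlower h hh η hη0 t ht)
  -- UPPER
  · intro K' hK'
    have hcont : Tendsto (fun η : ℝ => ∑ h ∈ S, L h * (c h * ((1 + (-1) * η) / a h) ^ (-α)))
        (nhds 0) (nhds (∑ h ∈ S, L h * (c h * a h ^ α))) :=
      tendsto_finset_sum _ (fun h hh => hconst h hh (-1))
    have h1 : ∀ᶠ η in nhdsWithin (0:ℝ) (Set.Ioi 0),
        (∑ h ∈ S, L h * (c h * ((1 + (-1) * η) / a h) ^ (-α))) < K' :=
      (hcont.mono_left nhdsWithin_le_nhds).eventually_lt_const hK'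
    have h2 : ∀ᶠ η in nhdsWithin (0:ℝ) (Set.Ioi 0), 0 < η := eventually_mem_nhdsWithin
    have h3 : ∀ᶠ η in nhdsWithin (0:ℝ) (Set.Ioi 0), η < 1 :=
      mem_nhdsWithin_of_mem_nhds (Iio_mem_nhds one_pos)
    obtain ⟨η, hand⟩ := ((h1.and h2).and h3).exists
    obtain ⟨⟨hηK, hη0⟩, hη1⟩ := hand
    have hAll : Tendsto (fun t => ∑ h ∈ S,
        ((∫ ω in {ω | ((1 - η) / a h) * t < ε h ω}, G ω ∂μ) / (ℓ t * t ^ (-α))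
          + ((μ {ω | δ * t < ε h ω}).toReal * (μ {ω | η * t < R h ω}).toReal)
            / (ℓ t * t ^ (-α)))) atTop
        (nhds (∑ h ∈ S, L h * (c h * ((1 + (-1) * η) / a h) ^ (-α)))) := by
      refine tendsto_finset_sum _ (fun h hh => ?_)
      have hρpos : 0 < (1 - η) / a h := div_pos (by linarith) (ha h hh)
      have hm := (hmain h hh ((1 - η) / a h) hρpos).add (herr1 h η hη0)
      have : (1 + (-1) * η) = 1 - η := by ring
      rw [this]
      simpa using hm
    filter_upwards [hAll.eventually_lt_const hηK, eventually_gt_atTop 0] with t hlt ht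
    refine lt_of_le_of_lt ?_ hlt
    rw [hdecomp t ht, Finset.sum_div]
    refine Finset.sum_le_sum (fun h hh => ?_)
    have hφt : 0 < ℓ t * t ^ (-α) := phi_pos hℓpos ht
    rw [← add_div]
    exact (div_le_div_iff_of_pos_right hφt).mpr (hupper h hh η hη0 hη1 t ht)



/-- both the strict and weak threshold conditional ratios tend to Num/Den -/
lemma ratio_both
    (hℓpos : ∀ x : ℝ, 0 < x → 0 < ℓ x)
    (hslow : ∀ d : ℝ, 0 < d → Tendsto (fun x : ℝ => ℓ (d * x) / ℓ x) atTop (nhds 1))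
    (Y : Ω → ℝ) (hYm : Measurable Y) (G : Ω → ℝ) (hGm : Measurable G)
    (hG0 : ∀ ω, 0 ≤ G ω) (hG1 : ∀ ω, G ω ≤ 1)
    {Num Den : ℝ} (hDen : 0 < Den)
    (hN : Tendsto (fun t => (∫ ω in {ω | t < Y ω}, G ω ∂μ) / (ℓ t * t ^ (-α))) atTop (nhds Num))
    (hD : Tendsto (fun t => (μ {ω | t < Y ω}).toReal / (ℓ t * t ^ (-α))) atTop (nhds Den)) :
    Tendsto (fun t => (∫ ω in {ω | t < Y ω}, G ω ∂μ) / (μ {ω | t < Y ω}).toReal) atTop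
      (nhds (Num / Den)) ∧
    Tendsto (fun t => (∫ ω in {ω | t ≤ Y ω}, G ω ∂μ) / (μ {ω | t ≤ Y ω}).toReal) atTop
      (nhds (Num / Den)) := by
  have hGint : Integrable G μ := CTCaux.integrable_of_bounded hGm 1
    (fun ω => abs_le.2 ⟨by linarith [hG0 ω], hG1 ω⟩)
  set N : ℝ → ℝ := fun t => ∫ ω in {ω | t < Y ω}, G ω ∂μ with hNdef
  set D : ℝ → ℝ := fun t => (μ {ω | t < Y ω}).toReal with hDdef
  set N' : ℝ → ℝ := fun t => ∫ ω in {ω | t ≤ Y ω}, G ω ∂μ with hN'def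
  set D' : ℝ → ℝ := fun t => (μ {ω | t ≤ Y ω}).toReal with hD'def
  -- division identity under nonzero φ
  have hdivtrans : ∀ (f g : ℝ → ℝ) (F G' : ℝ),
      Tendsto (fun t => f t / (ℓ t * t ^ (-α))) atTop (nhds F) →
      Tendsto (fun t => g t / (ℓ t * t ^ (-α))) atTop (nhds G') → G' ≠ 0 →
      Tendsto (fun t => f t / g t) atTop (nhds (F / G')) := by
    intro f g F G' hf hg hG'
    have := hf.div hg hG'
    refine this.congr' ?_
    filter_upwards [eventually_gt_atTop 0] with t ht
    have hφ : ℓ t * t ^ (-α) ≠ 0 := ne_of_gt (phi_pos hℓpos ht)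
    rcases eq_or_ne (g t) 0 with h0 | h0
    · simp [h0]
    · simp only [Pi.div_apply]
      have hℓ0 : ℓ t ≠ 0 := ne_of_gt (hℓpos t ht)
      field_simp
  have hDpos : ∀ᶠ t in atTop, 0 < D t := by
    filter_upwards [hD.eventually_const_lt (half_lt_self hDen), eventually_gt_atTop 0]
      with t h1 h2
    have hφ : 0 < ℓ t * t ^ (-α) := phi_pos hℓpos h2
    have hr : 0 < D t / (ℓ t * t ^ (-α)) := lt_trans (half_pos hDen) h1
    have := mul_pos hr hφ
    rwa [div_mul_cancel₀ _ (ne_of_gt hφ)] at this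
  have hstrict : Tendsto (fun t => N t / D t) atTop (nhds (Num / Den)) :=
    hdivtrans N D Num Den hN hD (ne_of_gt hDen)
  refine ⟨hstrict, ?_⟩
  -- scaled versions
  have hNscaled : ∀ lam : ℝ, 0 < lam → Tendsto (fun t => N (lam * t) / (ℓ t * t ^ (-α)))
      atTop (nhds (Num * lam ^ (-α))) := by
    intro lam hlam
    have hcomp : Tendsto (fun t : ℝ => lam * t) atTop atTop :=
      (tendsto_const_mul_atTop_of_pos hlam).2 tendsto_id
    refine CTChelp.ratio_transfer (g := fun t => ℓ (lam * t) * (lam * t) ^ (-α)) ?_ ?_ ?_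
    · exact hN.comp hcomp
    · exact phi_ratio hℓpos hslow hlam
    · filter_upwards [hcomp.eventually (eventually_gt_atTop 0)] with t ht
      exact ne_of_gt (phi_pos hℓpos ht)
  have hDscaled : ∀ lam : ℝ, 0 < lam → Tendsto (fun t => D (lam * t) / (ℓ t * t ^ (-α)))
      atTop (nhds (Den * lam ^ (-α))) := by
    intro lam hlam
    have hcomp : Tendsto (fun t : ℝ => lam * t) atTop atTop :=
      (tendsto_const_mul_atTop_of_pos hlam).2 tendsto_id
    refine CTChelp.ratio_transfer (g := fun t => ℓ (lam * t) * (lam * t) ^ (-α)) ?_ ?_ ?_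
    · exact hD.comp hcomp
    · exact phi_ratio hℓpos hslow hlam
    · filter_upwards [hcomp.eventually (eventually_gt_atTop 0)] with t ht
      exact ne_of_gt (phi_pos hℓpos ht)
  -- sandwiching N' and D' for 0 < lam < 1
  have hsand : ∀ lam : ℝ, 0 < lam → lam < 1 → ∀ t : ℝ, 0 < t →
      N t ≤ N' t ∧ N' t ≤ N (lam * t) ∧ D t ≤ D' t ∧ D' t ≤ D (lam * t) := by
    intro lam hlam hlam1 t ht
    have hsub1 : {ω | t < Y ω} ⊆ {ω | t ≤ Y ω} := fun ω hω => le_of_lt (Set.mem_setOf_eq ▸ hω)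
    have hsub2 : {ω | t ≤ Y ω} ⊆ {ω | lam * t < Y ω} := by
      intro ω hω
      have : lam * t < t := by nlinarith
      exact lt_of_lt_of_le this hω
    refine ⟨?_, ?_, ?_, ?_⟩
    · exact setIntegral_mono_set hGint.integrableOn (ae_of_all _ hG0)
        (HasSubset.Subset.eventuallyLE hsub1)
    · exact setIntegral_mono_set hGint.integrableOn (ae_of_all _ hG0)
        (HasSubset.Subset.eventuallyLE hsub2)
    · exact ENNReal.toReal_mono (measure_ne_top _ _) (measure_mono hsub1)
    · exact ENNReal.toReal_mono (measure_ne_top _ _) (measure_mono hsub2)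
  have hN0 : ∀ t, 0 ≤ N t := fun t => setIntegral_nonneg (CTCaux.tail_meas hYm t)
    (fun ω _ => hG0 ω)
  have hN'0 : ∀ t, 0 ≤ N' t := fun t => setIntegral_nonneg (hYm measurableSet_Ici)
    (fun ω _ => hG0 ω)
  -- continuity of the λ-limits at λ = 1
  have hlimcont : ∀ q : ℝ, Tendsto (fun lam : ℝ => q * lam ^ (-α))
      (nhds 1) (nhds q) := by
    intro q
    have hrpow : ContinuousAt (fun x : ℝ => x ^ (-α)) 1 :=
      Real.continuousAt_rpow_const _ _ (Or.inl one_ne_zero)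
    have := hrpow.tendsto.const_mul q
    simpa using this
  refine tendsto_order.2 ⟨?_, ?_⟩
  · -- lower: K' < Num/Den
    intro K' hK'
    have hcont : Tendsto (fun lam : ℝ => (Num / Den) * lam ^ α)
        (nhds 1) (nhds (Num / Den)) := by
      have hrpow : ContinuousAt (fun x : ℝ => x ^ α) 1 :=
        Real.continuousAt_rpow_const _ _ (Or.inl one_ne_zero)
      have := hrpow.tendsto.const_mul (Num / Den)
      simpa using this
    have h1 : ∀ᶠ lam in nhdsWithin (1:ℝ) (Set.Iio 1),
        K' < (Num / Den) * lam ^ α :=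
      ((hcont.mono_left nhdsWithin_le_nhds).eventually_const_lt hK')
    have h2 : ∀ᶠ lam in nhdsWithin (1:ℝ) (Set.Iio 1), lam < 1 := eventually_mem_nhdsWithin
    have h3 : ∀ᶠ lam in nhdsWithin (1:ℝ) (Set.Iio 1), 0 < lam :=
      mem_nhdsWithin_of_mem_nhds (Ioi_mem_nhds one_pos)
    obtain ⟨lam, hand⟩ := ((h1.and h2).and h3).exists
    obtain ⟨⟨hlamK, hlam1⟩, hlam0⟩ := hand
    -- N t / D (lam t) → Num / (Den * lam^(-α)) = (Num/Den) * lam^α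
    have hratio : Tendsto (fun t => N t / D (lam * t)) atTop
        (nhds ((Num / Den) * lam ^ α)) := by
      have := hdivtrans N (fun t => D (lam * t)) Num (Den * lam ^ (-α)) hN
        (hDscaled lam hlam0) (by positivity)
      have heq : Num / (Den * lam ^ (-α)) = (Num / Den) * lam ^ α := by
        rw [Real.rpow_neg (le_of_lt hlam0)]
        field_simp
      rwa [heq] at this
    filter_upwards [hratio.eventually_const_lt hlamK, eventually_gt_atTop 0, hDpos]
      with t hlt ht hDt
    have hs := hsand lam hlam0 hlam1 t ht
    refine lt_of_lt_of_le hlt ?_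
    have hD't : 0 < D' t := lt_of_lt_of_le hDt hs.2.2.1
    exact div_le_div₀ (hN'0 t) hs.1 hD't hs.2.2.2
  · -- upper: Num/Den < K'
    intro K' hK'
    have hcont : Tendsto (fun lam : ℝ => (Num / Den) * lam ^ (-α))
        (nhds 1) (nhds (Num / Den)) := by simpa using hlimcont (Num / Den)
    have h1 : ∀ᶠ lam in nhdsWithin (1:ℝ) (Set.Iio 1),
        (Num / Den) * lam ^ (-α) < K' :=
      ((hcont.mono_left nhdsWithin_le_nhds).eventually_lt_const hK')
    have h2 : ∀ᶠ lam in nhdsWithin (1:ℝ) (Set.Iio 1), lam < 1 := eventually_mem_nhdsWithin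
    have h3 : ∀ᶠ lam in nhdsWithin (1:ℝ) (Set.Iio 1), 0 < lam :=
      mem_nhdsWithin_of_mem_nhds (Ioi_mem_nhds one_pos)
    obtain ⟨lam, hand⟩ := ((h1.and h2).and h3).exists
    obtain ⟨⟨hlamK, hlam1⟩, hlam0⟩ := hand
    have hratio : Tendsto (fun t => N (lam * t) / D t) atTop
        (nhds ((Num / Den) * lam ^ (-α))) := by
      have := hdivtrans (fun t => N (lam * t)) D (Num * lam ^ (-α)) Den
        (hNscaled lam hlam0) hD (ne_of_gt hDen)
      have heq : (Num * lam ^ (-α)) / Den = (Num / Den) * lam ^ (-α) := by ring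
      rwa [heq] at this
    filter_upwards [hratio.eventually_lt_const hlamK, eventually_gt_atTop 0, hDpos]
      with t hlt ht hDt
    have hs := hsand lam hlam0 hlam1 t ht
    refine lt_of_le_of_lt ?_ hlt
    exact div_le_div₀ (hN0 (lam * t)) hs.2.1 hDt hs.2.2.1

/-- passing from u→1⁻ conditioning on {F(X) > u} to threshold conditioning -/
lemma gamma_limit
    (Xy : Ω → ℝ) (hXy : Measurable Xy) (Fy : ℝ → ℝ)
    (hFy : ∀ x, Fy x = (μ {ω | Xy ω ≤ x}).toReal)
    (htailpos : ∀ x : ℝ, 0 < (μ {ω | x < Xy ω}).toReal)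
    (G : Ω → ℝ) {v : ℝ}
    (hgt : Tendsto (fun t => (∫ ω in {ω | t < Xy ω}, G ω ∂μ) / (μ {ω | t < Xy ω}).toReal)
      atTop (nhds v))
    (hge : Tendsto (fun t => (∫ ω in {ω | t ≤ Xy ω}, G ω ∂μ) / (μ {ω | t ≤ Xy ω}).toReal)
      atTop (nhds v)) :
    Tendsto (fun u => ∫ ω, G ω ∂(μ[|{ω | u < Fy (Xy ω)}])) (nhdsWithin 1 (Set.Iio 1))
      (nhds v) := by
  have hFmono : Monotone Fy := fun x y hxy => by
    rw [hFy x, hFy y]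
    exact ENNReal.toReal_mono (measure_ne_top _ _) (measure_mono fun ω hω => le_trans hω hxy)
  have hFlt1 : ∀ x, Fy x < 1 := by
    intro x
    rw [hFy x, CTCaux.cdf_eq_one_sub hXy x]
    linarith [htailpos x]
  set s : ℝ → ℝ := fun u => sSup {x | Fy x ≤ u} with hsdef
  have hAne : ∀ u : ℝ, 0 < u → {x | Fy x ≤ u}.Nonempty := by
    intro u hu
    have h1 : Tendsto Fy atBot (nhds 0) := by
      have := CTCaux.tendsto_cdf_atBot (μ := μ) hXy
      refine this.congr (fun x => ?_)
      rw [hFy x]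
    obtain ⟨x, hx⟩ := (h1.eventually_lt_const hu).exists
    exact ⟨x, le_of_lt hx⟩
  have hbdd : ∀ u : ℝ, u < 1 → BddAbove {x | Fy x ≤ u} := by
    intro u hu
    have h1 : Tendsto Fy atTop (nhds 1) := by
      have := CTCaux.tendsto_cdf_atTop (μ := μ) hXy
      refine this.congr (fun x => ?_)
      rw [hFy x]
    obtain ⟨T, hT⟩ := eventually_atTop.1 (h1.eventually_const_lt hu)
    refine ⟨T, fun x hx => ?_⟩
    by_contra hc
    push_neg at hc
    exact absurd hx (by simp only [Set.mem_setOf_eq]; linarith [hT x (le_of_lt hc)])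
  have hAlow : ∀ u : ℝ, 0 < u → ∀ x, x < s u → Fy x ≤ u := by
    intro u hu x hx
    obtain ⟨y, hy, hxy⟩ := exists_lt_of_lt_csSup (hAne u hu) hx
    exact le_trans (hFmono (le_of_lt hxy)) hy
  have hE : ∀ u : ℝ, 0 < u → u < 1 →
      {ω | u < Fy (Xy ω)} = {ω | s u < Xy ω} ∨
      {ω | u < Fy (Xy ω)} = {ω | s u ≤ Xy ω} := by
    intro u hu0 hu1
    by_cases hFs : Fy (s u) ≤ u
    · left
      ext ω
      simp only [Set.mem_setOf_eq]
      constructor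
      · intro hlt
        by_contra hc
        push_neg at hc
        exact absurd (le_trans (hFmono hc) hFs) (not_le.2 hlt)
      · intro hlt
        by_contra hc
        push_neg at hc
        have : Xy ω ∈ {x | Fy x ≤ u} := hc
        exact absurd (le_csSup (hbdd u hu1) this) (not_le.2 hlt)
    · right
      push_neg at hFs
      ext ω
      simp only [Set.mem_setOf_eq]
      constructor
      · intro hlt
        by_contra hc
        push_neg at hc
        exact absurd (hAlow u hu0 _ hc) (not_le.2 hlt)
      · intro hle
        exact lt_of_lt_of_le hFs (hFmono hle)
  have hstend : Tendsto s (nhdsWithin (1:ℝ) (Set.Iio 1)) atTop := by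
    rw [tendsto_atTop]
    intro T
    have hev1 : ∀ᶠ u in nhdsWithin (1:ℝ) (Set.Iio 1), Fy T < u :=
      mem_nhdsWithin_of_mem_nhds (Ioi_mem_nhds (hFlt1 T))
    have hev2 : ∀ᶠ u in nhdsWithin (1:ℝ) (Set.Iio 1), u < 1 := eventually_mem_nhdsWithin
    filter_upwards [hev1, hev2] with u h1 h2
    exact le_csSup (hbdd u h2) (le_of_lt h1)
  have hcond : ∀ A : Set Ω,
      ∫ ω, G ω ∂(μ[|A]) = (∫ ω in A, G ω ∂μ) / (μ A).toReal := by
    intro A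
    rw [ProbabilityTheory.cond, integral_smul_measure, smul_eq_mul, ENNReal.toReal_inv,
      inv_mul_eq_div]
  rw [Metric.tendsto_nhds]
  intro r hr
  obtain ⟨T, hT⟩ := eventually_atTop.1
    ((Metric.tendsto_nhds.1 hgt r hr).and (Metric.tendsto_nhds.1 hge r hr))
  have hev0 : ∀ᶠ u in nhdsWithin (1:ℝ) (Set.Iio 1), (0:ℝ) < u :=
    mem_nhdsWithin_of_mem_nhds (Ioi_mem_nhds one_pos)
  have hev1 : ∀ᶠ u in nhdsWithin (1:ℝ) (Set.Iio 1), u < 1 := eventually_mem_nhdsWithin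
  filter_upwards [tendsto_atTop.1 hstend T, hev0, hev1] with u hsu h0u h1u
  rcases hE u h0u h1u with heq | heq
  · rw [heq, hcond]
    exact (hT (s u) hsu).1
  · rw [heq, hcond]
    exact (hT (s u) hsu).2

/-- set-integral over an independent event factorizes -/
lemma setIntegral_indepFun {W Z : Ω → ℝ} (hWint : Integrable W μ) (hZm : Measurable Z)
    (hind : IndepFun W Z μ) (x : ℝ) :
    ∫ ω in {ω | x < Z ω}, W ω ∂μ = (∫ ω, W ω ∂μ) * (μ {ω | x < Z ω}).toReal := by
  have hAm : MeasurableSet {ω | x < Z ω} := CTCaux.tail_meas hZm x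
  set ind : Ω → ℝ := Set.indicator {ω | x < Z ω} (fun _ => (1:ℝ)) with hinddef
  have hindeq : ind = (Set.indicator (Set.Ioi x) (fun _ => (1:ℝ))) ∘ Z := by
    funext ω
    by_cases hω : x < Z ω <;>
      simp [hinddef, Set.indicator_apply, hω, Set.mem_Ioi]
  have hindindep : IndepFun W ind μ := by
    rw [hindeq]
    exact hind.comp measurable_id (measurable_const.indicator measurableSet_Ioi)
  have hindint : Integrable ind μ := (integrable_const (1:ℝ)).indicator hAm
  have hmuleq : Set.indicator {ω | x < Z ω} W = W * ind := by
    funext ω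
    by_cases hω : x < Z ω
    · simp [hinddef, Set.indicator_of_mem, hω]
    · simp [hinddef, Set.indicator_of_notMem, hω]
  rw [← integral_indicator hAm, hmuleq,
    hindindep.integral_mul_eq_mul_integral hWint.aestronglyMeasurable hindint.aestronglyMeasurable]
  congr 1
  rw [hinddef, integral_indicator hAm]
  simp [setIntegral_const, measureReal_def]

/-- independent case: h is not a coordinate of G -/
lemma L_indep
    (hεmeas : ∀ j, Measurable (ε j))
    (hεindep : iIndepFun ε μ)
    (hc : ∀ j, 0 < c j)
    (hℓpos : ∀ x : ℝ, 0 < x → 0 < ℓ x)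
    (htail : ∀ j, Tendsto (fun x : ℝ => (μ {ω | x < ε j ω}).toReal / (ℓ x * x ^ (-α)))
      atTop (nhds (c j)))
    {h : Fin p} {Sk : Finset (Fin p)} (hhSk : h ∉ Sk)
    (G : Ω → ℝ) (hGm : Measurable G) (hG0 : ∀ ω, 0 ≤ G ω) (hG1 : ∀ ω, G ω ≤ 1)
    (gfun : (↥Sk → ℝ) → ℝ) (hgm : Measurable gfun)
    (hGeq : ∀ ω, G ω = gfun (fun g : ↥Sk => ε g ω)) :
    Tendsto (fun x => (∫ ω in {ω | x < ε h ω}, G ω ∂μ) / (μ {ω | x < ε h ω}).toReal)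
      atTop (nhds (∫ ω, G ω ∂μ)) := by
  have hGint : Integrable G μ := CTCaux.integrable_of_bounded hGm 1
    (fun ω => abs_le.2 ⟨by linarith [hG0 ω], hG1 ω⟩)
  have hGindep : IndepFun G (ε h) μ := by
    have hτ := indep_tuple hεmeas hεindep hhSk
    have h2 := hτ.comp measurable_id hgm
    have hGeq' : G = gfun ∘ (fun ω (g : ↥Sk) => ε g ω) := funext hGeq
    rw [hGeq']
    exact h2.symm
  refine tendsto_const_nhds.congr' ?_
  filter_upwards [eventually_tail_pos hℓpos hc htail h] with x hx
  rw [setIntegral_indepFun hGint (hεmeas h) hGindep x, mul_div_assoc,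
    div_self (ne_of_gt hx), mul_one]

/-- ancestor case: conditionally on ε_h large, F_k(X_k) → 1 -/
lemma L_one
    (hεmeas : ∀ j, Measurable (ε j))
    (hεindep : iIndepFun ε μ)
    (hc : ∀ j, 0 < c j)
    (hℓpos : ∀ x : ℝ, 0 < x → 0 < ℓ x)
    (htail : ∀ j, Tendsto (fun x : ℝ => (μ {ω | x < ε j ω}).toReal / (ℓ x * x ^ (-α)))
      atTop (nhds (c j)))
    {h : Fin p} {Sk : Finset (Fin p)} (hhSk : h ∈ Sk)
    (b : Fin p → ℝ) (hb : ∀ g ∈ Sk, 0 < b g)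
    (Xk : Ω → ℝ) (hXkdef : ∀ ω, Xk ω = ∑ g ∈ Sk, b g * ε g ω)
    (Fk : ℝ → ℝ) (hFk : ∀ x, Fk x = (μ {ω | Xk ω ≤ x}).toReal) :
    Tendsto (fun x => (∫ ω in {ω | x < ε h ω}, Fk (Xk ω) ∂μ) / (μ {ω | x < ε h ω}).toReal)
      atTop (nhds 1) := by
  have hbh := hb h hhSk
  have heqX : Xk = fun ω => ∑ g ∈ Sk, b g * ε g ω := funext hXkdef
  have hXkmeas : Measurable Xk := by
    rw [heqX]
    exact Finset.measurable_sum _ (fun g _ => (hεmeas g).const_mul (b g))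
  have hFmono : Monotone Fk := fun x y hxy => by
    rw [hFk x, hFk y]
    exact ENNReal.toReal_mono (measure_ne_top _ _) (measure_mono fun ω hω => le_trans hω hxy)
  have hF0 : ∀ y, 0 ≤ Fk y := fun y => by rw [hFk y]; exact ENNReal.toReal_nonneg
  have hF1 : ∀ y, Fk y ≤ 1 := fun y => by rw [hFk y]; exact CTCaux.cdf_le_one y
  set G : Ω → ℝ := fun ω => Fk (Xk ω) with hGdef
  have hGm : Measurable G := hFmono.measurable.comp hXkmeas
  have hGint : Integrable G μ := CTCaux.integrable_of_bounded hGm 1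
    (fun ω => abs_le.2 ⟨by linarith [hF0 (Xk ω)], hF1 (Xk ω)⟩)
  set RR : Ω → ℝ := fun ω => ∑ g ∈ Sk.erase h, b g * ε g ω with hRRdef
  have hRRmeas : Measurable RR :=
    Finset.measurable_sum _ (fun g _ => (hεmeas g).const_mul (b g))
  have hsplit : ∀ ω, Xk ω = b h * ε h ω + RR ω := fun ω => by
    rw [hXkdef ω, hRRdef]
    exact (Finset.add_sum_erase Sk (fun g => b g * ε g ω) hhSk).symm
  set w : ℝ → ℝ := fun x => ∫ ω, Fk (b h * x + RR ω) ∂μ with hwdef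
  have hψmeas : ∀ x : ℝ, Measurable (fun ω => Fk (b h * x + RR ω)) :=
    fun x => hFmono.measurable.comp (hRRmeas.const_add (b h * x))
  have hψint : ∀ x : ℝ, Integrable (fun ω => Fk (b h * x + RR ω)) μ :=
    fun x => CTCaux.integrable_of_bounded (hψmeas x) 1
      (fun ω => abs_le.2 ⟨by linarith [hF0 (b h * x + RR ω)], hF1 _⟩)
  have hψindep : ∀ x : ℝ, IndepFun (fun ω => Fk (b h * x + RR ω)) (ε h) μ := by
    intro x
    have hτ := indep_tuple hεmeas hεindep (Finset.notMem_erase h Sk)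
    set gfun : (↥(Sk.erase h) → ℝ) → ℝ :=
      fun v => Fk (b h * x + ∑ g ∈ (Sk.erase h).attach, b g * v g) with hgdef
    have hgm : Measurable gfun := hFmono.measurable.comp
      ((Finset.measurable_sum _ (fun g _ => (measurable_pi_apply g).const_mul _)).const_add _)
    have hψeq : (fun ω => Fk (b h * x + RR ω))
        = gfun ∘ (fun ω (g : ↥(Sk.erase h)) => ε g ω) := by
      funext ω
      simp only [Function.comp_apply, hgdef, hRRdef]
      rw [Finset.sum_attach (Sk.erase h) (fun g => b g * ε g ω)]
    rw [hψeq]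
    exact (hτ.comp measurable_id hgm).symm
  have hlow : ∀ x : ℝ, w x * (μ {ω | x < ε h ω}).toReal
      ≤ ∫ ω in {ω | x < ε h ω}, G ω ∂μ := by
    intro x
    rw [hwdef, ← setIntegral_indepFun (hψint x) (hεmeas h) (hψindep x) x]
    refine setIntegral_mono_on (hψint x).integrableOn hGint.integrableOn
      (CTCaux.tail_meas (hεmeas h) x) (fun ω hω => ?_)
    have hω' : x < ε h ω := hω
    have harg : b h * x + RR ω ≤ Xk ω := by
      rw [hsplit ω]
      have := mul_le_mul_of_nonneg_left (le_of_lt hω') (le_of_lt hbh)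
      linarith
    exact hFmono harg
  have hup : ∀ x : ℝ, ∫ ω in {ω | x < ε h ω}, G ω ∂μ ≤ (μ {ω | x < ε h ω}).toReal :=
    fun x => CTChelp.setIntegral_le_measure hGint (fun ω => hF1 (Xk ω))
      (CTCaux.tail_meas (hεmeas h) x)
  have hw1 : Tendsto w atTop (nhds 1) := by
    have hFtop : Tendsto Fk atTop (nhds 1) := by
      have := CTCaux.tendsto_cdf_atTop (μ := μ) hXkmeas
      refine this.congr (fun y => ?_)
      rw [hFk y]
    rw [tendsto_iff_seq_tendsto]
    intro xs hxs
    have hlim : ∀ ω : Ω, Tendsto (fun n => Fk (b h * xs n + RR ω)) atTop (nhds 1) := by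
      intro ω
      have hinner : Tendsto (fun n => b h * xs n + RR ω) atTop atTop :=
        tendsto_atTop_add_const_right _ (RR ω) ((tendsto_const_mul_atTop_of_pos hbh).2 hxs)
      exact hFtop.comp hinner
    have hdc := tendsto_integral_of_dominated_convergence (μ := μ)
      (F := fun n ω => Fk (b h * xs n + RR ω)) (f := fun _ => (1:ℝ))
      (bound := fun _ => (1:ℝ))
      (fun n => (hψmeas (xs n)).aestronglyMeasurable)
      (integrable_const 1)
      (fun n => ae_of_all _ (fun ω => by
        show ‖Fk (b h * xs n + RR ω)‖ ≤ 1
        rw [Real.norm_eq_abs]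
        exact abs_le.2 ⟨by linarith [hF0 (b h * xs n + RR ω)], hF1 _⟩))
      (ae_of_all _ hlim)
    have hone : (∫ _, (1:ℝ) ∂μ) = 1 := by simp
    rw [hone] at hdc
    exact hdc
  refine tendsto_of_tendsto_of_tendsto_of_le_of_le' hw1 tendsto_const_nhds ?_ ?_
  · filter_upwards [eventually_tail_pos hℓpos hc htail h] with x hx
    rw [le_div_iff₀ hx]
    exact hlow x
  · filter_upwards [eventually_tail_pos hℓpos hc htail h] with x hx
    rw [div_le_one hx]
    exact hup x

end Master

end CTCrv

open MeasureTheory ProbabilityTheory Filter Set CTCaux CTChelp CTCmat CTCrv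
open scoped ProbabilityTheory

/-- if X_i causes X_j then Γ_ij = 1 and Γ_ji ∈ (1/2, 1). -/
theorem causal_tail_coefficient_cause_case
    {Ω : Type*} [MeasurableSpace Ω] (μ : Measure Ω) [IsProbabilityMeasure μ]
    (p : ℕ) (B : Matrix (Fin p) (Fin p) ℝ)
    (hBnn : ∀ j k, 0 ≤ B j k)
    (hacyc : ∀ k : Fin p, ¬ Relation.TransGen (fun a b : Fin p => 0 < B b a) k k)
    (ε : Fin p → Ω → ℝ) (hεmeas : ∀ j, Measurable (ε j))
    (hεindep : ProbabilityTheory.iIndepFun ε μ)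
    (X : Fin p → Ω → ℝ)
    (hX : ∀ j ω, X j ω = (∑ k, B j k * X k ω) + ε j ω)
    (An : Fin p → Set (Fin p))
    (hAn : ∀ h j : Fin p, h ∈ An j ↔ Relation.ReflTransGen (fun a b : Fin p => 0 < B b a) h j)
    (beta : Fin p → Fin p → ℝ) (hbeta : ∀ h j, beta h j = (1 - B)⁻¹ j h)
    (α : ℝ) (hα : 0 < α)
    (c : Fin p → ℝ) (hc : ∀ j, 0 < c j)
    (ℓ : ℝ → ℝ) (hℓmeas : Measurable ℓ) (hℓpos : ∀ x : ℝ, 0 < x → 0 < ℓ x)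
    (hslow : ∀ d : ℝ, 0 < d →
      Tendsto (fun x : ℝ => ℓ (d * x) / ℓ x) atTop (nhds 1))
    (htail : ∀ j, Tendsto (fun x : ℝ => (μ {ω | x < ε j ω}).toReal / (ℓ x * x ^ (-α)))
      atTop (nhds (c j)))
    (F : Fin p → ℝ → ℝ)
    (hF : ∀ j t, F j t = (μ {ω | X j ω ≤ t}).toReal)
    (Γ : Fin p → Fin p → ℝ → ℝ)
    (hΓ : ∀ i j : Fin p, ∀ u : ℝ,
      Γ i j u = ∫ ω, F j (X j ω) ∂(μ[|{ω | u < F i (X i ω)}]))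
    (i j : Fin p) (hij : i ≠ j) (hcause : i ∈ An j) :
    Tendsto (Γ i j) (nhdsWithin 1 (Set.Iio 1)) (nhds 1) ∧
    (∃ v ∈ Set.Ioo (1 / 2 : ℝ) 1,
      Tendsto (Γ j i) (nhdsWithin 1 (Set.Iio 1)) (nhds v)) := by
  classical
  -- representation of X as positive combination of noises over ancestor sets
  have hrep : ∀ k (ω : Ω), X k ω = ∑ h : Fin p, CTCmat.Nmat B p k h * ε h ω :=
    fun k ω => CTCmat.solve hBnn hacyc (fun j' => hX j' ω) k
  set bco : Fin p → Fin p → ℝ := fun h k => CTCmat.Nmat B p k h with hbco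
  have hbnn : ∀ h k, 0 ≤ bco h k := fun h k => CTCmat.Nmat_nonneg hBnn k h
  have hbpos : ∀ h k, 0 < bco h k ↔ h ∈ An k := by
    intro h k
    rw [hAn]
    exact CTCmat.Nmat_pos_iff hBnn hacyc k h
  set SS : Fin p → Finset (Fin p) := fun k => Finset.univ.filter (fun h => h ∈ An k) with hSS
  have hmemSS : ∀ h k, h ∈ SS k ↔ h ∈ An k := by
    intro h k
    simp [hSS]
  have hXrep : ∀ k (ω : Ω), X k ω = ∑ h ∈ SS k, bco h k * ε h ω := by
    intro k ω
    rw [hrep k ω]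
    symm
    apply Finset.sum_subset (Finset.subset_univ _)
    intro h _ hnot
    have hnp : ¬ 0 < bco h k := fun hp => hnot ((hmemSS h k).2 ((hbpos h k).1 hp))
    have h0 : bco h k = 0 := le_antisymm (not_lt.1 hnp) (hbnn h k)
    rw [h0, zero_mul]
  have hRTGrefl : ∀ k, k ∈ An k := fun k => (hAn k k).2 Relation.ReflTransGen.refl
  have hSSne : ∀ k, (SS k).Nonempty := fun k => ⟨k, (hmemSS k k).2 (hRTGrefl k)⟩
  have hbposSS : ∀ k, ∀ h ∈ SS k, 0 < bco h k :=
    fun k h hh => (hbpos h k).2 ((hmemSS h k).1 hh)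
  have hXmeas : ∀ k, Measurable (X k) := by
    intro k
    have heq : X k = fun ω => ∑ h ∈ SS k, bco h k * ε h ω := funext (hXrep k)
    rw [heq]
    exact Finset.measurable_sum _ (fun h _ => (hεmeas h).const_mul _)
  have hAnij : An i ⊆ An j := by
    intro h hh
    exact (hAn h j).2 (Relation.ReflTransGen.trans ((hAn h i).1 hh) ((hAn i j).1 hcause))
  have hjnotAni : j ∉ An i := by
    intro hji
    have h1 : Relation.TransGen (fun a b : Fin p => 0 < B b a) i j := by
      rcases (Relation.reflTransGen_iff_eq_or_transGen.1 ((hAn i j).1 hcause)) with heq | ht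
      · exact absurd heq.symm hij
      · exact ht
    have h2 : Relation.TransGen (fun a b : Fin p => 0 < B b a) j i := by
      rcases (Relation.reflTransGen_iff_eq_or_transGen.1 ((hAn j i).1 hji)) with heq | ht
      · exact absurd heq hij
      · exact ht
    exact hacyc i (h1.trans h2)
  -- cdf properties
  have hFmono : ∀ k, Monotone (F k) := by
    intro k x y hxy
    rw [hF k x, hF k y]
    exact ENNReal.toReal_mono (measure_ne_top _ _) (measure_mono fun ω hω => le_trans hω hxy)
  have hFnn : ∀ k y, 0 ≤ F k y := fun k y => by rw [hF k y]; exact ENNReal.toReal_nonneg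
  have hFle1 : ∀ k y, F k y ≤ 1 := fun k y => by rw [hF k y]; exact CTCaux.cdf_le_one y
  have hGmeas : ∀ k, Measurable (fun ω => F k (X k ω)) :=
    fun k => (hFmono k).measurable.comp (hXmeas k)
  -- tail asymptotics of each X y
  have hL1 : ∀ y : Fin p, ∀ h ∈ SS y, Tendsto
      (fun x => (∫ ω in {ω | x < ε h ω}, (1:ℝ) ∂μ) / (μ {ω | x < ε h ω}).toReal)
      atTop (nhds 1) := by
    intro y h _
    refine tendsto_const_nhds.congr' ?_
    filter_upwards [CTCrv.eventually_tail_pos hℓpos hc htail h] with x hx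
    rw [setIntegral_const, smul_eq_mul, mul_one, measureReal_def, div_self (ne_of_gt hx)]
  have hseteq : ∀ y : Fin p, ∀ t : ℝ,
      {ω | t < ∑ h ∈ SS y, bco h y * ε h ω} = {ω | t < X y ω} := by
    intro y t
    ext ω
    simp only [Set.mem_setOf_eq]
    rw [hXrep y ω]
  have htailY : ∀ y : Fin p, Tendsto
      (fun t => (μ {ω | t < X y ω}).toReal / (ℓ t * t ^ (-α))) atTop
      (nhds (∑ h ∈ SS y, c h * bco h y ^ α)) := by
    intro y
    have hM := CTCrv.masterM hεmeas hεindep hc hℓpos hslow htail (SS y) (hSSne y)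
      (fun h => bco h y) (hbposSS y) (fun _ => (1:ℝ)) measurable_const
      (fun _ => zero_le_one) (fun _ => le_refl 1) (fun _ => 1) (hL1 y)
    simp only [one_mul] at hM
    refine hM.congr (fun t => ?_)
    rw [hseteq y t, setIntegral_const, smul_eq_mul, mul_one, measureReal_def]
  have hDenpos : ∀ y : Fin p, 0 < ∑ h ∈ SS y, c h * bco h y ^ α := by
    intro y
    refine Finset.sum_pos (fun h hh => ?_) (hSSne y)
    exact mul_pos (hc h) (Real.rpow_pos_of_pos (hbposSS y h hh) _)
  have htailposX : ∀ y : Fin p, ∀ x : ℝ, 0 < (μ {ω | x < X y ω}).toReal := by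
    intro y x
    have hev : ∀ᶠ t in atTop, 0 < (μ {ω | t < X y ω}).toReal := by
      filter_upwards [(htailY y).eventually_const_lt (half_lt_self (hDenpos y)),
        eventually_gt_atTop 0] with t h1 h2
      have hφ : 0 < ℓ t * t ^ (-α) := CTCrv.phi_pos hℓpos h2
      have hr : 0 < (μ {ω | t < X y ω}).toReal / (ℓ t * t ^ (-α)) :=
        lt_trans (half_pos (hDenpos y)) h1
      have := mul_pos hr hφ
      rwa [div_mul_cancel₀ _ (ne_of_gt hφ)] at this
    obtain ⟨t, ht, htx⟩ := (hev.and (eventually_ge_atTop x)).exists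
    exact lt_of_lt_of_le ht (ENNReal.toReal_mono (measure_ne_top _ _)
      (measure_mono (fun ω hω => lt_of_le_of_lt htx hω)))
  -- the mean of F_i (X_i)
  set m : ℝ := ∫ ω, F i (X i ω) ∂μ with hmdef
  have hm_half : 1 / 2 ≤ m := CTCaux.mean_cdf_ge_half (hXmeas i) (hF i)
  have hm_lt1 : m < 1 := by
    refine CTCaux.mean_cdf_lt_one (hXmeas i) (hF i) (fun x => ?_)
    rw [CTCaux.cdf_eq_one_sub (hXmeas i) x]
    linarith [htailposX i x]
  -- gfun representation for independence
  have hgfun : ∀ k : Fin p, ∃ gf : (↥(SS k) → ℝ) → ℝ, Measurable gf ∧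
      ∀ ω, F k (X k ω) = gf (fun g : ↥(SS k) => ε g ω) := by
    intro k
    refine ⟨fun v => F k (∑ g ∈ (SS k).attach, bco g k * v g), ?_, ?_⟩
    · exact (hFmono k).measurable.comp
        (Finset.measurable_sum _ (fun g _ => (measurable_pi_apply g).const_mul _))
    · intro ω
      congr 1
      rw [hXrep k ω, ← Finset.sum_attach (SS k) (fun g => bco g k * ε g ω)]
  -- === direction Γ i j ===
  have part1 : Tendsto (Γ i j) (nhdsWithin 1 (Set.Iio 1)) (nhds 1) := by
    have hLij : ∀ h ∈ SS i, Tendsto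
        (fun x => (∫ ω in {ω | x < ε h ω}, F j (X j ω) ∂μ) / (μ {ω | x < ε h ω}).toReal)
        atTop (nhds 1) := by
      intro h hh
      have hhj : h ∈ SS j := (hmemSS h j).2 (hAnij ((hmemSS h i).1 hh))
      exact CTCrv.L_one hεmeas hεindep hc hℓpos htail hhj (fun g => bco g j)
        (hbposSS j) (X j) (hXrep j) (F j) (hF j)
    have hM := CTCrv.masterM hεmeas hεindep hc hℓpos hslow htail (SS i) (hSSne i)
      (fun h => bco h i) (hbposSS i) (fun ω => F j (X j ω)) (hGmeas j)
      (fun ω => hFnn j (X j ω)) (fun ω => hFle1 j (X j ω)) (fun _ => 1) hLij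
    simp only [one_mul] at hM
    have hN : Tendsto
        (fun t => (∫ ω in {ω | t < X i ω}, F j (X j ω) ∂μ) / (ℓ t * t ^ (-α))) atTop
        (nhds (∑ h ∈ SS i, c h * bco h i ^ α)) := by
      refine hM.congr (fun t => ?_)
      rw [hseteq i t]
    have hrb := CTCrv.ratio_both hℓpos hslow (X i) (hXmeas i) (fun ω => F j (X j ω))
      (hGmeas j) (fun ω => hFnn j (X j ω)) (fun ω => hFle1 j (X j ω)) (hDenpos i) hN (htailY i)
    rw [div_self (ne_of_gt (hDenpos i))] at hrb
    have hΓij : Γ i j = fun u => ∫ ω, F j (X j ω) ∂(μ[|{ω | u < F i (X i ω)}]) :=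
      funext (hΓ i j)
    rw [hΓij]
    exact CTCrv.gamma_limit (X i) (hXmeas i) (F i) (hF i) (htailposX i)
      (fun ω => F j (X j ω)) hrb.1 hrb.2
  -- === direction Γ j i ===
  set SA : ℝ := ∑ h ∈ (SS j).filter (fun h => h ∈ An i), c h * bco h j ^ α with hSAdef
  set SB : ℝ := ∑ h ∈ (SS j).filter (fun h => h ∉ An i), c h * bco h j ^ α with hSBdef
  have hwpos : ∀ h ∈ SS j, 0 < c h * bco h j ^ α :=
    fun h hh => mul_pos (hc h) (Real.rpow_pos_of_pos (hbposSS j h hh) _)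
  have hSApos : 0 < SA := by
    refine Finset.sum_pos (fun h hh => hwpos h (Finset.mem_filter.1 hh).1) ?_
    exact ⟨i, Finset.mem_filter.2 ⟨(hmemSS i j).2 hcause, hRTGrefl i⟩⟩
  have hSBpos : 0 < SB := by
    refine Finset.sum_pos (fun h hh => hwpos h (Finset.mem_filter.1 hh).1) ?_
    exact ⟨j, Finset.mem_filter.2 ⟨(hmemSS j j).2 (hRTGrefl j), hjnotAni⟩⟩
  have hsplitDen : (∑ h ∈ SS j, c h * bco h j ^ α) = SA + SB :=
    (Finset.sum_filter_add_sum_filter_not (SS j) (fun h => h ∈ An i) _).symm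
  set Num : ℝ := ∑ h ∈ SS j, (if h ∈ An i then (1:ℝ) else m) * (c h * bco h j ^ α)
    with hNumdef
  have hsplitNum : Num = SA + m * SB := by
    rw [hNumdef, ← Finset.sum_filter_add_sum_filter_not (SS j) (fun h => h ∈ An i)]
    congr 1
    · refine Finset.sum_congr rfl (fun h hh => ?_)
      rw [if_pos (Finset.mem_filter.1 hh).2, one_mul]
    · rw [Finset.mul_sum]
      refine Finset.sum_congr rfl (fun h hh => ?_)
      rw [if_neg (Finset.mem_filter.1 hh).2]
  set v : ℝ := Num / (∑ h ∈ SS j, c h * bco h j ^ α) with hvdef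
  have hv1 : v < 1 := by
    rw [hvdef, div_lt_one (hDenpos j), hsplitNum, hsplitDen]
    nlinarith
  have hv2 : 1 / 2 < v := by
    rw [hvdef, lt_div_iff₀ (hDenpos j), hsplitNum, hsplitDen]
    nlinarith
  have part2 : Tendsto (Γ j i) (nhdsWithin 1 (Set.Iio 1)) (nhds v) := by
    have hLji : ∀ h ∈ SS j, Tendsto
        (fun x => (∫ ω in {ω | x < ε h ω}, F i (X i ω) ∂μ) / (μ {ω | x < ε h ω}).toReal)
        atTop (nhds (if h ∈ An i then (1:ℝ) else m)) := by
      intro h hh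
      by_cases hhi : h ∈ An i
      · rw [if_pos hhi]
        exact CTCrv.L_one hεmeas hεindep hc hℓpos htail ((hmemSS h i).2 hhi)
          (fun g => bco g i) (hbposSS i) (X i) (hXrep i) (F i) (hF i)
      · rw [if_neg hhi]
        obtain ⟨gf, hgfm, hgfe⟩ := hgfun i
        have hhSk : h ∉ SS i := fun hmem => hhi ((hmemSS h i).1 hmem)
        exact CTCrv.L_indep hεmeas hεindep hc hℓpos htail hhSk
          (fun ω => F i (X i ω)) (hGmeas i) (fun ω => hFnn i (X i ω))
          (fun ω => hFle1 i (X i ω)) gf hgfm hgfe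
    have hM := CTCrv.masterM hεmeas hεindep hc hℓpos hslow htail (SS j) (hSSne j)
      (fun h => bco h j) (hbposSS j) (fun ω => F i (X i ω)) (hGmeas i)
      (fun ω => hFnn i (X i ω)) (fun ω => hFle1 i (X i ω))
      (fun h => if h ∈ An i then (1:ℝ) else m) hLji
    have hN : Tendsto
        (fun t => (∫ ω in {ω | t < X j ω}, F i (X i ω) ∂μ) / (ℓ t * t ^ (-α))) atTop
        (nhds Num) := by
      refine hM.congr (fun t => ?_)
      rw [hseteq j t]
    have hrb := CTCrv.ratio_both hℓpos hslow (X j) (hXmeas j) (fun ω => F i (X i ω))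
      (hGmeas i) (fun ω => hFnn i (X i ω)) (fun ω => hFle1 i (X i ω)) (hDenpos j) hN (htailY j)
    have hΓji : Γ j i = fun u => ∫ ω, F i (X i ω) ∂(μ[|{ω | u < F j (X j ω)}]) :=
      funext (hΓ j i)
    rw [hΓji]
    exact CTCrv.gamma_limit (X j) (hXmeas j) (F j) (hF j) (htailposX j)
      (fun ω => F i (X i ω)) hrb.1 hrb.2
  exact ⟨part1, v, ⟨hv2, hv1⟩, part2⟩
end

section
/- Let Y_1, …, Y_m be jointly independent real-valued random variables, let α > 0, let ℓ : (0,∞) → (0,∞) be a measurable slowly varying function (ℓ(cx)/ℓ(x) → 1 as x → ∞ for every c > 0), and let c_1, …, c_m > 0 be such that P(Y_h > x)/(ℓ(x) x^{−α}) → c_h as x → ∞ for each h. Then for any positive coefficients β_1, …, β_m > 0, P(Σ_{h=1}^m β_h Y_h > x) / (ℓ(x) x^{−α}) → Σ_{h=1}^m c_h β_h^α as x → ∞. -/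
/-!
The tail of `b * X` at `x` is the tail of `X` at `x / b`, and regular variation of the normalizer
`g x = ℓ x * x ^ (-α)` turns the rescaling into the factor `b ^ α`. For independent `X` and `Z` the
sum exceeds a large `x` essentially only when one summand alone does:
`{X + Z > x}` lies in `{X > (1-ε)x} ∪ {Z > (1-ε)x} ∪ {X > εx, Z > εx}` and contains
`{X > (1+ε)x, Z > -εx} ∪ {X > -εx, Z > (1+ε)x}`. By independence the joint events cost a product
of two probabilities, one of which is a tail tending to `0`, so they are negligible against `g`;
letting `ε → 0` shows that tail constants add, and induction over the summands finishes the proof.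
-/

open MeasureTheory ProbabilityTheory Filter Set Topology

def IsRegularlyVarying (g : ℝ → ℝ) (ρ : ℝ) : Prop :=
  (∀ᶠ x in atTop, 0 < g x) ∧ ∀ d : ℝ, 0 < d → Tendsto (fun x => g (d * x) / g x) atTop (𝓝 (d ^ ρ))

namespace IsRegularlyVarying

variable {f g : ℝ → ℝ} {ρ σ : ℝ}

theorem rpow (ρ : ℝ) : IsRegularlyVarying (fun x => x ^ ρ) ρ := by
  refine ⟨(eventually_gt_atTop 0).mono fun x hx => Real.rpow_pos_of_pos hx ρ, fun d hd => ?_⟩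
  refine tendsto_const_nhds.congr' ?_
  filter_upwards [eventually_gt_atTop 0] with x hx
  rw [Real.mul_rpow hd.le hx.le, mul_div_cancel_right₀ _ (Real.rpow_pos_of_pos hx ρ).ne']

theorem mul (hf : IsRegularlyVarying f ρ) (hg : IsRegularlyVarying g σ) :
    IsRegularlyVarying (fun x => f x * g x) (ρ + σ) := by
  refine ⟨by filter_upwards [hf.1, hg.1] with x hfx hgx using mul_pos hfx hgx, fun d hd => ?_⟩
  simp only [Real.rpow_add hd, mul_div_mul_comm]
  exact (hf.2 d hd).mul (hg.2 d hd)

theorem tendsto_comp_mul_div (hg : IsRegularlyVarying g ρ) {F : ℝ → ℝ} {a d : ℝ}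
    (hF : Tendsto (fun x => F x / g x) atTop (𝓝 a)) (hd : 0 < d) :
    Tendsto (fun x => F (d * x) / g x) atTop (𝓝 (a * d ^ ρ)) := by
  have hdx : Tendsto (fun x => d * x) atTop atTop := tendsto_id.const_mul_atTop hd
  refine ((hF.comp hdx).mul (hg.2 d hd)).congr' ?_
  filter_upwards [hdx.eventually hg.1] with x hx
  exact div_mul_div_cancel₀ hx.ne'

end IsRegularlyVarying

def HasTailAsymptotic {Ω : Type*} [MeasurableSpace Ω] (μ : Measure Ω) (X : Ω → ℝ)
    (g : ℝ → ℝ) (a : ℝ) : Prop :=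
  Tendsto (fun x => μ.real {ω | x < X ω} / g x) atTop (𝓝 a)

section Tails

variable {Ω : Type*} [MeasurableSpace Ω] {μ : Measure Ω} {X Z : Ω → ℝ}

theorem tendsto_measureReal_lt_atTop [IsFiniteMeasure μ] (hX : AEMeasurable X μ) :
    Tendsto (fun x => μ.real {ω | x < X ω}) atTop (𝓝 0) := by
  have hempty : ⋂ x : ℝ, {ω | x < X ω} = ∅ :=
    eq_empty_of_forall_notMem fun ω hω => lt_irrefl (X ω) (mem_iInter.1 hω (X ω))
  have h := tendsto_measure_iInter_atTop (μ := μ) (s := fun x : ℝ => {ω | x < X ω})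
    (fun x => nullMeasurableSet_lt aemeasurable_const hX)
    (fun x y hxy ω (hω : y < X ω) => hxy.trans_lt hω) ⟨0, measure_ne_top μ _⟩
  rw [hempty, measure_empty] at h
  exact (ENNReal.tendsto_toReal ENNReal.zero_ne_top).comp h

theorem tendsto_measureReal_lt_atBot [IsProbabilityMeasure μ] :
    Tendsto (fun x => μ.real {ω | x < X ω}) atBot (𝓝 1) := by
  have huniv : ⋃ x : ℝ, {ω | x < X ω} = univ :=
    eq_univ_of_forall fun ω => mem_iUnion.2 ⟨X ω - 1, by simp⟩
  have h := tendsto_measure_iUnion_atBot (μ := μ) (s := fun x : ℝ => {ω | x < X ω})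
    fun x y hxy ω (hω : y < X ω) => hxy.trans_lt hω
  rw [huniv, measure_univ] at h
  exact (ENNReal.tendsto_toReal ENNReal.one_ne_top).comp h

theorem ProbabilityTheory.IndepFun.measureReal_lt_inter (hind : IndepFun X Z μ) (s t : ℝ) :
    μ.real ({ω | s < X ω} ∩ {ω | t < Z ω}) = μ.real {ω | s < X ω} * μ.real {ω | t < Z ω} := by
  simp only [measureReal_def, ← ENNReal.toReal_mul]
  exact congrArg _ (hind.measure_inter_preimage_eq_mul _ _ measurableSet_Ioi measurableSet_Ioi)

theorem measureReal_lt_add_le [IsFiniteMeasure μ] (hind : IndepFun X Z μ) (x ε : ℝ) :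
    μ.real {ω | x < X ω + Z ω} ≤ μ.real {ω | (1 - ε) * x < X ω} + μ.real {ω | (1 - ε) * x < Z ω}
      + μ.real {ω | ε * x < X ω} * μ.real {ω | ε * x < Z ω} := by
  rw [← hind.measureReal_lt_inter]
  calc μ.real {ω | x < X ω + Z ω}
      ≤ μ.real ({ω | (1 - ε) * x < X ω} ∪ {ω | (1 - ε) * x < Z ω}
          ∪ ({ω | ε * x < X ω} ∩ {ω | ε * x < Z ω})) := by
        refine measureReal_mono fun ω (hω : x < X ω + Z ω) => ?_
        simp only [mem_union, mem_inter_iff, mem_ofPred_eq]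
        by_contra! h
        obtain ⟨⟨hX, hZ⟩, hXZ⟩ := h
        have := hXZ (by linarith)
        linarith
    _ ≤ _ := (measureReal_union_le _ _).trans (by gcongr; exact measureReal_union_le _ _)

theorem le_measureReal_lt_add [IsFiniteMeasure μ] (hind : IndepFun X Z μ)
    (hX : AEMeasurable X μ) (hZ : AEMeasurable Z μ) (x ε : ℝ) :
    μ.real {ω | (1 + ε) * x < X ω} * μ.real {ω | -(ε * x) < Z ω}
      + μ.real {ω | -(ε * x) < X ω} * μ.real {ω | (1 + ε) * x < Z ω}
      - μ.real {ω | (1 + ε) * x < X ω} * μ.real {ω | (1 + ε) * x < Z ω}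
      ≤ μ.real {ω | x < X ω + Z ω} := by
  simp only [← hind.measureReal_lt_inter]
  set A := {ω | (1 + ε) * x < X ω}
  set B := {ω | (1 + ε) * x < Z ω}
  set A' := {ω | -(ε * x) < X ω}
  set B' := {ω | -(ε * x) < Z ω}
  have hincl : (A ∩ B') ∪ (A' ∩ B) ⊆ {ω | x < X ω + Z ω} := by
    rintro ω (⟨hA, hB'⟩ | ⟨hA', hB⟩) <;>
      · simp only [A, B, A', B', mem_ofPred_eq] at *
        linarith
  have hA'B : NullMeasurableSet (A' ∩ B) μ :=
    (nullMeasurableSet_lt aemeasurable_const hX).inter (nullMeasurableSet_lt aemeasurable_const hZ)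
  calc μ.real (A ∩ B') + μ.real (A' ∩ B) - μ.real (A ∩ B)
      ≤ μ.real (A ∩ B') + μ.real (A' ∩ B) - μ.real ((A ∩ B') ∩ (A' ∩ B)) := by
        have hsub : (A ∩ B') ∩ (A' ∩ B) ⊆ A ∩ B := fun ω hω => ⟨hω.1.1, hω.2.2⟩
        exact sub_le_sub_left (measureReal_mono hsub) _
    _ = μ.real ((A ∩ B') ∪ (A' ∩ B)) := by
        rw [← measureReal_union_add_inter₀ hA'B]; ring
    _ ≤ μ.real {ω | x < X ω + Z ω} := measureReal_mono hincl

end Tails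

theorem tendsto_of_eventually_approx_bounds {ι κ : Type*} {l : Filter ι} {k : Filter κ} [k.NeBot]
    {f : ι → ℝ} {L : ℝ} {lo up : κ → ℝ} (hlo : Tendsto lo k (𝓝 L)) (hup : Tendsto up k (𝓝 L))
    (hf_lo : ∀ᶠ e in k, ∃ u : ι → ℝ, Tendsto u l (𝓝 (lo e)) ∧ u ≤ᶠ[l] f)
    (hf_up : ∀ᶠ e in k, ∃ u : ι → ℝ, Tendsto u l (𝓝 (up e)) ∧ f ≤ᶠ[l] u) :
    Tendsto f l (𝓝 L) := by
  refine tendsto_order.2 ⟨fun r hr => ?_, fun r hr => ?_⟩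
  · obtain ⟨e, hre, u, hu, huf⟩ := ((hlo.eventually (lt_mem_nhds hr)).and hf_lo).exists
    filter_upwards [hu.eventually (lt_mem_nhds hre), huf] with x hx hx' using hx.trans_le hx'
  · obtain ⟨e, her, u, hu, hfu⟩ := ((hup.eventually (gt_mem_nhds hr)).and hf_up).exists
    filter_upwards [hu.eventually (gt_mem_nhds her), hfu] with x hx hx' using hx'.trans_lt hx

namespace HasTailAsymptotic

variable {Ω : Type*} [MeasurableSpace Ω] {μ : Measure Ω} {X Z : Ω → ℝ} {g : ℝ → ℝ} {ρ a b : ℝ}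

theorem zero : HasTailAsymptotic μ (fun _ => 0) g 0 := by
  refine tendsto_const_nhds.congr' ?_
  filter_upwards [eventually_ge_atTop 0] with x hx
  simp [not_lt.2 hx]

theorem const_mul (hX : HasTailAsymptotic μ X g a) (hg : IsRegularlyVarying g ρ) (hb : 0 < b) :
    HasTailAsymptotic μ (fun ω => b * X ω) g (a * b ^ (-ρ)) := by
  have h := hg.tendsto_comp_mul_div hX (inv_pos.2 hb)
  simpa only [HasTailAsymptotic, inv_mul_lt_iff₀ hb, Real.inv_rpow hb.le, ← Real.rpow_neg hb.le]
    using h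

theorem exists_lower_bound_tendsto [IsProbabilityMeasure μ] (hind : IndepFun X Z μ)
    (hXm : AEMeasurable X μ) (hZm : AEMeasurable Z μ) (hg : IsRegularlyVarying g ρ)
    (hX : HasTailAsymptotic μ X g a) (hZ : HasTailAsymptotic μ Z g b) {ε : ℝ} (hε : 0 < ε) :
    ∃ u : ℝ → ℝ, Tendsto u atTop (𝓝 ((a + b) * (1 + ε) ^ ρ)) ∧
      u ≤ᶠ[atTop] fun x => μ.real {ω | x < X ω + Z ω} / g x := by
  have hε' : 0 < 1 + ε := by positivity
  have hnegε : Tendsto (fun x : ℝ => -(ε * x)) atTop atBot :=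
    tendsto_neg_atTop_atBot.comp (tendsto_id.const_mul_atTop hε)
  have hXlow : Tendsto (fun x => μ.real {ω | -(ε * x) < X ω}) atTop (𝓝 1) :=
    tendsto_measureReal_lt_atBot.comp hnegε
  have hZlow : Tendsto (fun x => μ.real {ω | -(ε * x) < Z ω}) atTop (𝓝 1) :=
    tendsto_measureReal_lt_atBot.comp hnegε
  have hZ0 : Tendsto (fun x => μ.real {ω | (1 + ε) * x < Z ω}) atTop (𝓝 0) :=
    (tendsto_measureReal_lt_atTop hZm).comp (tendsto_id.const_mul_atTop hε')
  have hA := hg.tendsto_comp_mul_div hX hε'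
  have hlim := ((hA.mul hZlow).add ((hg.tendsto_comp_mul_div hZ hε').mul hXlow)).sub (hA.mul hZ0)
  rw [mul_one, mul_one, mul_zero, sub_zero, ← add_mul] at hlim
  refine ⟨_, hlim, ?_⟩
  filter_upwards [hg.1] with x hx
  calc _ = (μ.real {ω | (1 + ε) * x < X ω} * μ.real {ω | -(ε * x) < Z ω}
        + μ.real {ω | -(ε * x) < X ω} * μ.real {ω | (1 + ε) * x < Z ω}
        - μ.real {ω | (1 + ε) * x < X ω} * μ.real {ω | (1 + ε) * x < Z ω}) / g x := by ring
    _ ≤ _ := div_le_div_of_nonneg_right (le_measureReal_lt_add hind hXm hZm x ε) hx.le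

theorem exists_upper_bound_tendsto [IsFiniteMeasure μ] (hind : IndepFun X Z μ)
    (hZm : AEMeasurable Z μ) (hg : IsRegularlyVarying g ρ)
    (hX : HasTailAsymptotic μ X g a) (hZ : HasTailAsymptotic μ Z g b) {ε : ℝ} (hε : 0 < ε)
    (hε1 : ε < 1) :
    ∃ u : ℝ → ℝ, Tendsto u atTop (𝓝 ((a + b) * (1 - ε) ^ ρ)) ∧
      (fun x => μ.real {ω | x < X ω + Z ω} / g x) ≤ᶠ[atTop] u := by
  have hε' : 0 < 1 - ε := sub_pos.2 hε1
  have hZ0 : Tendsto (fun x => μ.real {ω | ε * x < Z ω}) atTop (𝓝 0) :=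
    (tendsto_measureReal_lt_atTop hZm).comp (tendsto_id.const_mul_atTop hε)
  have hlim := ((hg.tendsto_comp_mul_div hX hε').add (hg.tendsto_comp_mul_div hZ hε')).add
    ((hg.tendsto_comp_mul_div hX hε).mul hZ0)
  rw [mul_zero, add_zero, ← add_mul] at hlim
  refine ⟨_, hlim, ?_⟩
  filter_upwards [hg.1] with x hx
  calc _ ≤ (μ.real {ω | (1 - ε) * x < X ω} + μ.real {ω | (1 - ε) * x < Z ω}
        + μ.real {ω | ε * x < X ω} * μ.real {ω | ε * x < Z ω}) / g x :=
      div_le_div_of_nonneg_right (measureReal_lt_add_le hind x ε) hx.le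
    _ = _ := by ring

theorem add [IsProbabilityMeasure μ] (hind : IndepFun X Z μ) (hXm : AEMeasurable X μ)
    (hZm : AEMeasurable Z μ) (hg : IsRegularlyVarying g ρ) (hX : HasTailAsymptotic μ X g a)
    (hZ : HasTailAsymptotic μ Z g b) :
    HasTailAsymptotic μ (fun ω => X ω + Z ω) g (a + b) := by
  have hlo : Tendsto (fun ε : ℝ => (a + b) * (1 + ε) ^ ρ) (𝓝[>] 0) (𝓝 (a + b)) := by
    refine tendsto_nhdsWithin_of_tendsto_nhds ?_
    simpa using (by fun_prop (disch := norm_num) :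
      ContinuousAt (fun ε : ℝ => (a + b) * (1 + ε) ^ ρ) 0).tendsto
  have hup : Tendsto (fun ε : ℝ => (a + b) * (1 - ε) ^ ρ) (𝓝[>] 0) (𝓝 (a + b)) := by
    refine tendsto_nhdsWithin_of_tendsto_nhds ?_
    simpa using (by fun_prop (disch := norm_num) :
      ContinuousAt (fun ε : ℝ => (a + b) * (1 - ε) ^ ρ) 0).tendsto
  refine tendsto_of_eventually_approx_bounds hlo hup ?_ ?_
  · filter_upwards [self_mem_nhdsWithin] with ε hε
    exact exists_lower_bound_tendsto hind hXm hZm hg hX hZ hε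
  · filter_upwards [Ioo_mem_nhdsGT zero_lt_one] with ε ⟨hε, hε1⟩
    exact exists_upper_bound_tendsto hind hZm hg hX hZ hε hε1

theorem finset_sum [IsProbabilityMeasure μ] {ι : Type*} {Y : ι → Ω → ℝ} {c : ι → ℝ}
    (hind : iIndepFun Y μ) (hYm : ∀ i, AEMeasurable (Y i) μ) (hg : IsRegularlyVarying g ρ)
    (hY : ∀ i, HasTailAsymptotic μ (Y i) g (c i)) (s : Finset ι) :
    HasTailAsymptotic μ (fun ω => ∑ i ∈ s, Y i ω) g (∑ i ∈ s, c i) := by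
  induction s using Finset.cons_induction with
  | empty => simpa using zero
  | cons i s hi ih =>
    have hindep : IndepFun (Y i) (fun ω => ∑ j ∈ s, Y j ω) μ := by
      simpa [Finset.sum_fn] using (hind.indepFun_finsetSum_of_notMem₀ hYm hi).symm
    simpa only [Finset.sum_cons] using
      (hY i).add hindep (hYm i) (Finset.aemeasurable_fun_sum s fun j _ => hYm j) hg ih

end HasTailAsymptotic

theorem tail_of_positive_linear_combination_general
    {Ω : Type*} [MeasurableSpace Ω] (μ : Measure Ω) [IsProbabilityMeasure μ]
    (m : ℕ)
    (Y : Fin m → Ω → ℝ) (hYmeas : ∀ h, Measurable (Y h))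
    (hYindep : ProbabilityTheory.iIndepFun Y μ)
    (α : ℝ)
    (ℓ : ℝ → ℝ) (hℓpos : ∀ x : ℝ, 0 < x → 0 < ℓ x)
    (hslow : ∀ d : ℝ, 0 < d →
      Tendsto (fun x : ℝ => ℓ (d * x) / ℓ x) atTop (nhds 1))
    (c : Fin m → ℝ)
    (htail : ∀ h, Tendsto (fun x : ℝ => (μ {ω | x < Y h ω}).toReal / (ℓ x * x ^ (-α)))
      atTop (nhds (c h)))
    (β : Fin m → ℝ) (hβ : ∀ h, 0 < β h) :
    Tendsto (fun x : ℝ =>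
        (μ {ω | x < ∑ h, β h * Y h ω}).toReal / (ℓ x * x ^ (-α)))
      atTop (nhds (∑ h, c h * β h ^ α)) := by
  have hℓ : IsRegularlyVarying ℓ 0 :=
    ⟨(eventually_gt_atTop 0).mono hℓpos, fun d hd => by simpa using hslow d hd⟩
  have hg : IsRegularlyVarying (fun x => ℓ x * x ^ (-α)) (-α) := by
    simpa using hℓ.mul (.rpow (-α))
  have hβY (h : Fin m) : HasTailAsymptotic μ (fun ω => β h * Y h ω) (fun x => ℓ x * x ^ (-α))
      (c h * β h ^ α) := by
    simpa using HasTailAsymptotic.const_mul (htail h) hg (hβ h)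
  have hindep : iIndepFun (fun h ω => β h * Y h ω) μ :=
    hYindep.comp (fun h t => β h * t) fun h => measurable_const_mul _
  exact HasTailAsymptotic.finset_sum hindep (fun h => ((hYmeas h).const_mul _).aemeasurable) hg
    hβY Finset.univ

/-- tail equivalence of positive linear combinations of independent
regularly varying random variables with comparable upper tails. -/
theorem tail_of_positive_linear_combination
    {Ω : Type*} [MeasurableSpace Ω] (μ : Measure Ω) [IsProbabilityMeasure μ]
    (m : ℕ) (hm : 1 ≤ m)
    (Y : Fin m → Ω → ℝ) (hYmeas : ∀ h, Measurable (Y h))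
    (hYindep : ProbabilityTheory.iIndepFun Y μ)
    (α : ℝ) (hα : 0 < α)
    (ℓ : ℝ → ℝ) (hℓmeas : Measurable ℓ) (hℓpos : ∀ x : ℝ, 0 < x → 0 < ℓ x)
    (hslow : ∀ d : ℝ, 0 < d →
      Tendsto (fun x : ℝ => ℓ (d * x) / ℓ x) atTop (nhds 1))
    (c : Fin m → ℝ) (hc : ∀ h, 0 < c h)
    (htail : ∀ h, Tendsto (fun x : ℝ => (μ {ω | x < Y h ω}).toReal / (ℓ x * x ^ (-α)))
      atTop (nhds (c h)))
    (β : Fin m → ℝ) (hβ : ∀ h, 0 < β h) :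
    Tendsto (fun x : ℝ =>
        (μ {ω | x < ∑ h, β h * Y h ω}).toReal / (ℓ x * x ^ (-α)))
      atTop (nhds (∑ h, c h * β h ^ α)) :=
  tail_of_positive_linear_combination_general μ m Y hYmeas hYindep α ℓ hℓpos hslow c htail β hβ
end
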